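/- arXiv:1210.7888 — 6 statements merged into one kernel-verified Lean document; each statement's English description precedes it below -/
import Mathlib

section
/- Let v be a nonarchimedean place of a number field K and L_v/K_v a finite extension with ramification index e_v, inertia degree f_v, residue characteristic p_v. The transfinite diameter of the ring of integers O_{L_v} ⊂ C_v with respect to the v-adic absolute value normalized by N_v = [K_v:Q_v]/[K:Q] equals exp(−N_v·log(p_v)/(e_v(q_v^{f_v}−1))), where q_v is the order of the residue field of K_v. In particular the logarithm of this transfinite diameter is strictly negative. -/
/-- The `n`-th diameter of a subset `E` of a nonarchimedean field (with respect to the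
norm `‖·‖`): the transfinite diameter is `lim_n d_n(E)`. -/
noncomputable def dn {F : Type*} [NormedField F] (E : Set F) (n : ℕ) : ℝ :=
  sSup {x : ℝ | ∃ z : Fin n → F, (∀ i, z i ∈ E) ∧
    x = (∏ ij ∈ Finset.univ.filter (fun ij : Fin n × Fin n => ij.1 ≠ ij.2),
      ‖z ij.1 - z ij.2‖) ^ (((n : ℝ) * (n - 1))⁻¹)}

/-!
Write `r = ‖π‖` and `Q = q ^ f`, and enumerate the residue representatives as `τ 0, …, τ (Q-1)`.
The base-`Q` expansions `Z_A = ∑ τ (a_j) π ^ j` satisfy `‖Z_A - Z_B‖ = r ^ c(A, B)`, where `c(A, B)`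
counts the low base-`Q` digits that `A` and `B` have in common. For `A = 0, …, n-1` at most
`n (n-1) / Q ^ k` ordered pairs agree modulo `Q ^ k`, so `d_n ≥ r ^ (1/(Q-1))`. Conversely, the
`Q ^ k` expansions of length `k` cover the unit ball by balls of radius `r ^ k`, so by
Cauchy–Schwarz at least `n² / Q ^ k - n` ordered pairs of any `n` points lie within `r ^ k` of each
other; summing over `k ≤ √n` gives `d_n ≤ r ^ (1/(Q-1) - o(1))`.
-/

open Finset Filter Topology IsUltrametricDist

lemma norm_sub_le_max_norm {E : Type*} [SeminormedAddCommGroup E] [IsUltrametricDist E]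
    (x y : E) : ‖x - y‖ ≤ max ‖x‖ ‖y‖ := by
  simpa [sub_eq_add_neg] using norm_add_le_max x (-y)

theorem Nat.modEq_pow_succ_iff {Q A B k : ℕ} (hQ : 0 < Q) :
    A ≡ B [MOD Q ^ (k + 1)] ↔ A % Q = B % Q ∧ A / Q ≡ B / Q [MOD Q ^ k] := by
  unfold Nat.ModEq
  rw [pow_succ', Nat.mod_mul, Nat.mod_mul]
  constructor
  · intro h
    have hlow : A % Q = B % Q := by
      simpa [Nat.add_mul_mod_self_left, Nat.mod_mod] using congrArg (· % Q) h
    rw [hlow] at h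
    exact ⟨hlow, Nat.eq_of_mul_eq_mul_left hQ (Nat.add_left_cancel h)⟩
  · rintro ⟨hlow, hhigh⟩
    rw [hlow, hhigh]

/-- The number of lowest base-`Q` digits that `A` and `B` share, capped at `m`. -/
def commonDigitCount (Q m A B : ℕ) : ℕ :=
  #{k ∈ range m | A ≡ B [MOD Q ^ (k + 1)]}

lemma commonDigitCount_succ_of_mod_eq {Q m A B : ℕ} (hQ : 0 < Q) (h : A % Q = B % Q) :
    commonDigitCount Q (m + 1) A B = commonDigitCount Q m (A / Q) (B / Q) + 1 := by
  simp only [commonDigitCount, card_filter, sum_range_succ', Nat.modEq_pow_succ_iff hQ, h,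
    true_and, pow_zero, Nat.modEq_one, if_true]

lemma commonDigitCount_succ_of_mod_ne {Q m A B : ℕ} (hQ : 0 < Q) (h : A % Q ≠ B % Q) :
    commonDigitCount Q (m + 1) A B = 0 := by
  simp only [commonDigitCount, card_filter, Nat.modEq_pow_succ_iff hQ, h, false_and, if_false,
    sum_const_zero]

section DigitExpansion

variable {F : Type*} [NormedField F] (Q : ℕ) (τ : ℕ → F) (π : F)

/-- `digitExpansion Q τ π m A = ∑_{j < m} τ (a_j) π ^ j`, where the `a_j` are the base-`Q`
digits of `A`. -/
def digitExpansion : ℕ → ℕ → F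
  | 0, _ => 0
  | m + 1, A => τ (A % Q) + π * digitExpansion m (A / Q)

variable {Q τ π}

lemma norm_digitExpansion_le_one [IsUltrametricDist F] (hQ : 0 < Q) (hτ : ∀ i < Q, ‖τ i‖ ≤ 1)
    (hπ : ‖π‖ ≤ 1) :
    ∀ m A, ‖digitExpansion Q τ π m A‖ ≤ 1
  | 0, _ => by simp [digitExpansion]
  | m + 1, A => by
    refine (norm_add_le_max _ _).trans (max_le (hτ _ (Nat.mod_lt _ hQ)) ?_)
    rw [norm_mul]
    exact mul_le_one₀ hπ (norm_nonneg _) (norm_digitExpansion_le_one hQ hτ hπ m _)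

lemma norm_digitExpansion_sub [IsUltrametricDist F] (hQ : 0 < Q) (hτ : ∀ i < Q, ‖τ i‖ ≤ 1)
    (hsep : ∀ i < Q, ∀ j < Q, i ≠ j → ‖τ i - τ j‖ = 1) (hπ : ‖π‖ < 1) :
    ∀ m A B, ¬ A ≡ B [MOD Q ^ m] →
      ‖digitExpansion Q τ π m A - digitExpansion Q τ π m B‖ = ‖π‖ ^ commonDigitCount Q m A B
  | 0, A, B, h => absurd (Nat.modEq_one) (by simpa using h)
  | m + 1, A, B, h => by
    have hsplit : digitExpansion Q τ π (m + 1) A - digitExpansion Q τ π (m + 1) B =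
        (τ (A % Q) - τ (B % Q)) +
          π * (digitExpansion Q τ π m (A / Q) - digitExpansion Q τ π m (B / Q)) := by
      simp only [digitExpansion]; ring
    rw [hsplit]
    by_cases hlow : A % Q = B % Q
    · have hhigh : ¬ A / Q ≡ B / Q [MOD Q ^ m] := fun h' =>
        h ((Nat.modEq_pow_succ_iff hQ).2 ⟨hlow, h'⟩)
      rw [hlow, sub_self, zero_add, norm_mul, norm_digitExpansion_sub hQ hτ hsep hπ m _ _ hhigh,
        commonDigitCount_succ_of_mod_eq hQ hlow, pow_succ']
    · have htail : ‖π * (digitExpansion Q τ π m (A / Q) - digitExpansion Q τ π m (B / Q))‖ < 1 := by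
        rw [norm_mul]
        refine mul_lt_one_of_nonneg_of_lt_one_left (norm_nonneg _) hπ ?_
        exact (norm_sub_le_max_norm _ _).trans (max_le
          (norm_digitExpansion_le_one hQ hτ hπ.le _ _) (norm_digitExpansion_le_one hQ hτ hπ.le _ _))
      have hdigit := hsep _ (Nat.mod_lt _ hQ) _ (Nat.mod_lt _ hQ) hlow
      rw [norm_add_eq_max_of_norm_ne_norm (by rw [hdigit]; exact htail.ne'), hdigit,
        max_eq_left htail.le, commonDigitCount_succ_of_mod_ne hQ hlow, pow_zero]

lemma exists_norm_sub_digitExpansion_le (hπ : π ≠ 0)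
    (hcov : ∀ x : F, ‖x‖ ≤ 1 → ∃ i < Q, ‖x - τ i‖ ≤ ‖π‖) :
    ∀ m, ∀ x : F, ‖x‖ ≤ 1 → ∃ A < Q ^ m, ‖x - digitExpansion Q τ π m A‖ ≤ ‖π‖ ^ m
  | 0, x, hx => ⟨0, by simp, by simpa [digitExpansion] using hx⟩
  | m + 1, x, hx => by
    obtain ⟨i, hi, hxi⟩ := hcov x hx
    have hQ : 0 < Q := i.zero_le.trans_lt hi
    have hπpos : 0 < ‖π‖ := norm_pos_iff.2 hπ
    obtain ⟨A, hA, hyA⟩ := exists_norm_sub_digitExpansion_le hπ hcov m ((x - τ i) / π)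
      (by rw [norm_div, div_le_one hπpos]; exact hxi)
    refine ⟨i + Q * A, ?_, ?_⟩
    · calc i + Q * A < Q + Q * A := by omega
        _ = Q * (A + 1) := by ring
        _ ≤ Q * Q ^ m := Nat.mul_le_mul_left _ hA
        _ = Q ^ (m + 1) := (pow_succ' _ _).symm
    · have hdigits : digitExpansion Q τ π (m + 1) (i + Q * A) =
          τ i + π * digitExpansion Q τ π m A := by
        simp [digitExpansion, Nat.add_mul_mod_self_left, Nat.mod_eq_of_lt hi,
          Nat.add_mul_div_left _ _ hQ, Nat.div_eq_of_lt hi]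
      have hx : x - (τ i + π * digitExpansion Q τ π m A) =
          π * ((x - τ i) / π - digitExpansion Q τ π m A) := by
        field_simp; ring
      rw [hdigits, hx, norm_mul, pow_succ']
      exact mul_le_mul_of_nonneg_left hyA hπpos.le

end DigitExpansion

lemma Finset.exists_bijOn_Iio_card {α : Type*} [Inhabited α] (T : Finset α) :
    ∃ τ : ℕ → α, Set.BijOn τ (Set.Iio #T) T := by
  refine ⟨fun i => T.toList[i]?.getD default, ?_, ?_, ?_⟩
  · intro i hi
    rw [Set.mem_Iio, ← length_toList] at hi
    simpa [List.getElem?_eq_getElem hi] using mem_toList.1 (List.getElem_mem hi)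
  · intro i hi j hj hij
    simp only [Set.mem_Iio, ← length_toList] at hi hj
    simp only [List.getElem?_eq_getElem hi, List.getElem?_eq_getElem hj, Option.getD_some] at hij
    exact (T.nodup_toList.getElem_inj_iff).1 hij
  · intro t ht
    obtain ⟨i, hi, rfl⟩ := List.mem_iff_getElem.1 (mem_toList.2 ht)
    exact ⟨i, by simpa using hi, by simp [List.getElem?_eq_getElem hi]⟩

lemma sq_card_le_card_mul_card_filter_eq {ι β : Type*} [Fintype ι] [DecidableEq β]
    {s : Finset β} {c : ι → β} (hc : ∀ i, c i ∈ s) :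
    Fintype.card ι ^ 2 ≤ #s * #{ij : ι × ι | c ij.1 = c ij.2} := by
  have hfibres : Fintype.card ι = ∑ b ∈ s, #{i | c i = b} :=
    card_eq_sum_card_fiberwise fun i _ => hc i
  have hpairs : #{ij : ι × ι | c ij.1 = c ij.2} = ∑ b ∈ s, #{i | c i = b} ^ 2 := by
    rw [card_eq_sum_card_fiberwise (f := fun ij : ι × ι => c ij.1) fun ij _ => hc ij.1]
    refine sum_congr rfl fun b _ => ?_
    rw [sq, ← card_product, ← univ_product_univ, ← filter_product]
    congr 1
    ext ⟨i, j⟩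
    simp only [mem_filter, mem_product, mem_univ, true_and]
    constructor
    · rintro ⟨hij, rfl⟩; exact ⟨rfl, hij.symm⟩
    · rintro ⟨rfl, hj⟩; exact ⟨hj.symm, rfl⟩
  rw [hfibres, hpairs]
  exact sq_sum_le_card_mul_sum_sq

lemma Fin.card_filter_ne_modEq_le (n M : ℕ) (i : Fin n) :
    #{j : Fin n | i ≠ j ∧ (i : ℕ) ≡ j [MOD M]} ≤ (n - 1) / M := by
  have heq {j j' : ℕ} (hdiv : j / M = j' / M) (hmod : j ≡ j' [MOD M]) : j = j' := by
    rw [← Nat.div_add_mod j M, ← Nat.div_add_mod j' M, hdiv, hmod]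
  calc #{j : Fin n | i ≠ j ∧ (i : ℕ) ≡ j [MOD M]}
      ≤ #((range ((n - 1) / M + 1)).erase ((i : ℕ) / M)) := by
        refine card_le_card_of_injOn (fun j : Fin n => (j : ℕ) / M) (fun j hj => ?_)
          (fun j hj j' hj' hjj' => Fin.ext (heq hjj' ?_))
        · simp only [coe_filter, mem_univ, true_and, Set.mem_ofPred_eq] at hj
          simp only [coe_erase, coe_range, Set.mem_sdiff, Set.mem_Iio, Set.mem_singleton_iff]
          refine ⟨Nat.lt_succ_of_le (Nat.div_le_div_right (by omega)), fun h => hj.1 ?_⟩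
          exact Fin.ext (heq h.symm hj.2)
        · simp only [coe_filter, mem_univ, true_and, Set.mem_ofPred_eq] at hj hj'
          exact hj.2.symm.trans hj'.2
    _ = (n - 1) / M := by
        rw [card_erase_of_mem, card_range, Nat.add_sub_cancel]
        exact mem_range.2 (Nat.lt_succ_of_le (Nat.div_le_div_right (by omega)))

section Diameter

variable {F : Type*} [NormedField F]

def offDiagPairs (n : ℕ) : Finset (Fin n × Fin n) :=
  Finset.univ.filter fun ij : Fin n × Fin n => ij.1 ≠ ij.2

lemma card_offDiagPairs_filter_modEq_le (n M : ℕ) :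
    (#{ij ∈ offDiagPairs n | (ij.1 : ℕ) ≡ ij.2 [MOD M]} : ℝ) ≤ n * (n - 1) / M := by
  have hcount : #{ij ∈ offDiagPairs n | (ij.1 : ℕ) ≡ ij.2 [MOD M]} ≤ n * ((n - 1) / M) := by
    rw [offDiagPairs, filter_filter, card_filter, Fintype.sum_prod_type]
    calc ∑ i : Fin n, ∑ j : Fin n, (if i ≠ j ∧ (i : ℕ) ≡ j [MOD M] then 1 else 0)
        ≤ ∑ _i : Fin n, (n - 1) / M := sum_le_sum fun i _ => by
          rw [← card_filter]; exact Fin.card_filter_ne_modEq_le n M i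
      _ = n * ((n - 1) / M) := by simp
  rcases Nat.eq_zero_or_pos n with rfl | hn
  · simp [offDiagPairs]
  calc (#{ij ∈ offDiagPairs n | (ij.1 : ℕ) ≡ ij.2 [MOD M]} : ℝ)
      ≤ n * (((n - 1) / M : ℕ) : ℝ) := by exact_mod_cast hcount
    _ ≤ n * (((n - 1 : ℕ) : ℝ) / M) := by gcongr; exact Nat.cast_div_le
    _ = n * (n - 1) / M := by rw [Nat.cast_sub hn, Nat.cast_one, mul_div_assoc]

lemma natCast_mul_sub_one_nonneg (n : ℕ) : 0 ≤ (n : ℝ) * (n - 1) := by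
  rcases n with _ | n <;> push_cast <;> nlinarith

lemma dn_le_rpow (E : Set F) (n : ℕ) {r b : ℝ} (hr : 0 < r)
    (h : ∀ z : Fin n → F, (∀ i, z i ∈ E) → ∏ ij ∈ offDiagPairs n, ‖z ij.1 - z ij.2‖ ≤ r ^ b) :
    dn E n ≤ r ^ (b / (n * (n - 1))) := by
  refine Real.sSup_le ?_ (Real.rpow_nonneg hr.le _)
  rintro _ ⟨z, hz, rfl⟩
  rw [div_eq_mul_inv, Real.rpow_mul hr.le]
  exact Real.rpow_le_rpow (prod_nonneg fun _ _ => norm_nonneg _) (h z hz)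
    (inv_nonneg.2 (natCast_mul_sub_one_nonneg n))

lemma rpow_le_dn [IsUltrametricDist F] {E : Set F} (hE : ∀ x ∈ E, ‖x‖ ≤ 1) {n : ℕ}
    {r b : ℝ} (hr : 0 < r) {z : Fin n → F} (hz : ∀ i, z i ∈ E)
    (h : r ^ b ≤ ∏ ij ∈ offDiagPairs n, ‖z ij.1 - z ij.2‖) :
    r ^ (b / (n * (n - 1))) ≤ dn E n := by
  have hexp : 0 ≤ ((n : ℝ) * (n - 1))⁻¹ := inv_nonneg.2 (natCast_mul_sub_one_nonneg n)
  have hbdd : BddAbove {x : ℝ | ∃ z : Fin n → F, (∀ i, z i ∈ E) ∧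
      x = (∏ ij ∈ offDiagPairs n, ‖z ij.1 - z ij.2‖) ^ ((n : ℝ) * (n - 1))⁻¹} := by
    refine ⟨1, ?_⟩
    rintro _ ⟨w, hw, rfl⟩
    refine Real.rpow_le_one (prod_nonneg fun _ _ => norm_nonneg _) ?_ hexp
    exact prod_le_one (fun _ _ => norm_nonneg _) fun ij _ =>
      (norm_sub_le_max_norm _ _).trans (max_le (hE _ (hw ij.1)) (hE _ (hw ij.2)))
  rw [div_eq_mul_inv, Real.rpow_mul hr.le]
  exact (Real.rpow_le_rpow (Real.rpow_nonneg hr.le _) h hexp).trans (le_csSup hbdd ⟨z, hz, rfl⟩)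

end Diameter

lemma hasSum_inv_pow_succ {Q : ℝ} (hQ : 1 < Q) :
    HasSum (fun k : ℕ => Q⁻¹ ^ (k + 1)) (Q - 1)⁻¹ := by
  have hgeom := (hasSum_geometric_of_lt_one (by positivity) (inv_lt_one_of_one_lt₀ hQ)).mul_left Q⁻¹
  have hsum : Q⁻¹ * (1 - Q⁻¹)⁻¹ = (Q - 1)⁻¹ := by
    have : Q - 1 ≠ 0 := sub_ne_zero.2 hQ.ne'
    field_simp
  simpa only [← pow_succ', hsum] using hgeom

lemma sum_commonDigitCount_le {Q : ℕ} (hQ : 1 < Q) (n : ℕ) :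
    (∑ ij ∈ offDiagPairs n, commonDigitCount Q n ij.1 ij.2 : ℕ) ≤ (n : ℝ) * (n - 1) / (Q - 1) := by
  have hQR : (1 : ℝ) < Q := by exact_mod_cast hQ
  have hswap : ∑ ij ∈ offDiagPairs n, commonDigitCount Q n ij.1 ij.2 =
      ∑ k ∈ range n, #{ij ∈ offDiagPairs n | (ij.1 : ℕ) ≡ ij.2 [MOD Q ^ (k + 1)]} :=
    sum_card_bipartiteAbove_eq_sum_card_bipartiteBelow _
  rw [hswap, Nat.cast_sum]
  calc ∑ k ∈ range n, (#{ij ∈ offDiagPairs n | (ij.1 : ℕ) ≡ ij.2 [MOD Q ^ (k + 1)]} : ℝ)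
      ≤ ∑ k ∈ range n, (n : ℝ) * (n - 1) * (Q : ℝ)⁻¹ ^ (k + 1) := sum_le_sum fun k _ => by
        simpa only [inv_pow, ← div_eq_mul_inv, Nat.cast_pow] using
          card_offDiagPairs_filter_modEq_le n (Q ^ (k + 1))
    _ = (n : ℝ) * (n - 1) * ∑ k ∈ range n, (Q : ℝ)⁻¹ ^ (k + 1) := (mul_sum _ _ _).symm
    _ ≤ (n : ℝ) * (n - 1) * ((Q : ℝ) - 1)⁻¹ :=
        mul_le_mul_of_nonneg_left (sum_le_hasSum _ (fun _ _ => by positivity)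
          (hasSum_inv_pow_succ hQR)) (natCast_mul_sub_one_nonneg n)
    _ = (n : ℝ) * (n - 1) / (Q - 1) := (div_eq_mul_inv _ _).symm

lemma le_pow_card_filter_le_pow {a r : ℝ} (ha : a ≤ 1) (hr0 : 0 ≤ r) (hr1 : r ≤ 1) (K : ℕ) :
    a ≤ r ^ #{k ∈ range K | a ≤ r ^ (k + 1)} := by
  set S := {k ∈ range K | a ≤ r ^ (k + 1)}
  rcases S.eq_empty_or_nonempty with hS | hS
  · rwa [hS, card_empty, pow_zero]
  have hsub : S ⊆ range (S.max' hS + 1) := fun k hk =>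
    mem_range.2 (Nat.lt_succ_of_le (S.le_max' k hk))
  calc a ≤ r ^ (S.max' hS + 1) := (mem_filter.1 (S.max'_mem hS)).2
    _ ≤ r ^ #S := pow_le_pow_of_le_one hr0 hr1 ((card_le_card hsub).trans (card_range _).le)

section Bounds

variable {F : Type*} [NormedField F] [IsUltrametricDist F] {Q : ℕ} {τ : ℕ → F} {π : F}

theorem rpow_inv_sub_one_le_dn (hQ : 1 < Q) (hτ : ∀ i < Q, ‖τ i‖ ≤ 1)
    (hsep : ∀ i < Q, ∀ j < Q, i ≠ j → ‖τ i - τ j‖ = 1) (hπ0 : π ≠ 0) (hπ1 : ‖π‖ < 1)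
    {n : ℕ} (hn : 2 ≤ n) :
    ‖π‖ ^ ((Q : ℝ) - 1)⁻¹ ≤ dn {x : F | ‖x‖ ≤ 1} n := by
  have hQ0 : 0 < Q := by omega
  have hπpos : 0 < ‖π‖ := norm_pos_iff.2 hπ0
  set z : Fin n → F := fun i => digitExpansion Q τ π n i
  have hdist : ∀ ij ∈ offDiagPairs n,
      ‖z ij.1 - z ij.2‖ = ‖π‖ ^ commonDigitCount Q n ij.1 ij.2 := fun ij hij => by
    refine norm_digitExpansion_sub hQ0 hτ hsep hπ1 n _ _ fun hmod => (mem_filter.1 hij).2 ?_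
    have hlt : ∀ i : Fin n, (i : ℕ) < Q ^ n := fun i => i.2.trans (Nat.lt_pow_self hQ)
    exact Fin.ext (Nat.ModEq.eq_of_lt_of_lt hmod (hlt _) (hlt _))
  have hprod : ‖π‖ ^ ((n : ℝ) * (n - 1) / (Q - 1)) ≤ ∏ ij ∈ offDiagPairs n, ‖z ij.1 - z ij.2‖ := by
    rw [prod_congr rfl hdist, prod_pow_eq_pow_sum, ← Real.rpow_natCast]
    exact Real.rpow_le_rpow_of_exponent_ge hπpos hπ1.le (sum_commonDigitCount_le hQ n)
  have hn' : (n : ℝ) * (n - 1) ≠ 0 := by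
    have : (2 : ℝ) ≤ n := by exact_mod_cast hn
    nlinarith
  calc ‖π‖ ^ ((Q : ℝ) - 1)⁻¹ = ‖π‖ ^ ((n : ℝ) * (n - 1) / (Q - 1) / (n * (n - 1))) := by
        rw [div_div_cancel_left' hn']
    _ ≤ dn {x : F | ‖x‖ ≤ 1} n :=
        rpow_le_dn (fun _ hx => hx) hπpos
          (fun i => norm_digitExpansion_le_one hQ0 hτ hπ1.le n i) hprod

lemma sub_le_card_offDiagPairs_filter_norm_sub_le (hπ0 : π ≠ 0)
    (hcov : ∀ x : F, ‖x‖ ≤ 1 → ∃ i < Q, ‖x - τ i‖ ≤ ‖π‖) {n : ℕ} {z : Fin n → F}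
    (hz : ∀ i, ‖z i‖ ≤ 1) (k : ℕ) :
    (n : ℝ) ^ 2 * (Q : ℝ)⁻¹ ^ k - n ≤ #{ij ∈ offDiagPairs n | ‖z ij.1 - z ij.2‖ ≤ ‖π‖ ^ k} := by
  obtain ⟨i₀, hi₀, -⟩ := hcov 0 (by simp)
  have hQ : (0 : ℝ) < Q := by exact_mod_cast i₀.zero_le.trans_lt hi₀
  choose A hA hclose using fun i => exists_norm_sub_digitExpansion_le hπ0 hcov k (z i) (hz i)
  have hpigeon : n ^ 2 ≤ Q ^ k * #{ij : Fin n × Fin n | A ij.1 = A ij.2} := by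
    simpa using sq_card_le_card_mul_card_filter_eq (s := range (Q ^ k)) fun i => mem_range.2 (hA i)
  have hsplit : ({ij : Fin n × Fin n | A ij.1 = A ij.2} : Finset (Fin n × Fin n)) ⊆
      {ij ∈ offDiagPairs n | ‖z ij.1 - z ij.2‖ ≤ ‖π‖ ^ k} ∪ univ.diag := by
    rintro ⟨i, j⟩ hij
    simp only [mem_filter, mem_univ, true_and] at hij
    by_cases hij' : i = j
    · exact mem_union_right _ (mem_diag.2 ⟨mem_univ _, hij'⟩)
    refine mem_union_left _ (mem_filter.2 ⟨mem_filter.2 ⟨mem_univ _, hij'⟩, ?_⟩)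
    have hdiff : z i - z j = (z i - digitExpansion Q τ π k (A i)) -
        (z j - digitExpansion Q τ π k (A j)) := by rw [hij]; ring
    rw [hdiff]
    exact (norm_sub_le_max_norm _ _).trans (max_le (hclose i) (hclose j))
  have hcard : n ^ 2 ≤ Q ^ k * (#{ij ∈ offDiagPairs n | ‖z ij.1 - z ij.2‖ ≤ ‖π‖ ^ k} + n) :=
    hpigeon.trans (Nat.mul_le_mul_left _ ((card_le_card hsplit).trans
      ((card_union_le _ _).trans (by simp [diag_card]))))
  have hcardR : (n : ℝ) ^ 2 ≤
      Q ^ k * (#{ij ∈ offDiagPairs n | ‖z ij.1 - z ij.2‖ ≤ ‖π‖ ^ k} + n) := by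
    exact_mod_cast hcard
  rw [inv_pow, ← div_eq_mul_inv, sub_le_iff_le_add, div_le_iff₀ (by positivity)]
  linarith

theorem dn_le_rpow_of_cover (hπ0 : π ≠ 0) (hπ1 : ‖π‖ ≤ 1)
    (hcov : ∀ x : F, ‖x‖ ≤ 1 → ∃ i < Q, ‖x - τ i‖ ≤ ‖π‖) (n K : ℕ) :
    dn {x : F | ‖x‖ ≤ 1} n ≤
      ‖π‖ ^ (((n : ℝ) ^ 2 * ∑ k ∈ range K, (Q : ℝ)⁻¹ ^ (k + 1) - K * n) / (n * (n - 1))) := by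
  have hπpos : 0 < ‖π‖ := norm_pos_iff.2 hπ0
  refine dn_le_rpow _ n hπpos fun z hz => ?_
  have hz1 (ij : Fin n × Fin n) : ‖z ij.1 - z ij.2‖ ≤ 1 :=
    (norm_sub_le_max_norm _ _).trans (max_le (hz ij.1) (hz ij.2))
  have hswap : ∑ ij ∈ offDiagPairs n, #{k ∈ range K | ‖z ij.1 - z ij.2‖ ≤ ‖π‖ ^ (k + 1)} =
      ∑ k ∈ range K, #{ij ∈ offDiagPairs n | ‖z ij.1 - z ij.2‖ ≤ ‖π‖ ^ (k + 1)} :=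
    sum_card_bipartiteAbove_eq_sum_card_bipartiteBelow _
  have hcount : (n : ℝ) ^ 2 * ∑ k ∈ range K, (Q : ℝ)⁻¹ ^ (k + 1) - K * n ≤
      (∑ ij ∈ offDiagPairs n, #{k ∈ range K | ‖z ij.1 - z ij.2‖ ≤ ‖π‖ ^ (k + 1)} : ℕ) := by
    rw [hswap, Nat.cast_sum]
    calc (n : ℝ) ^ 2 * ∑ k ∈ range K, (Q : ℝ)⁻¹ ^ (k + 1) - K * n
        = ∑ k ∈ range K, ((n : ℝ) ^ 2 * (Q : ℝ)⁻¹ ^ (k + 1) - n) := by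
          rw [sum_sub_distrib, mul_sum, sum_const, card_range, nsmul_eq_mul]
      _ ≤ _ := sum_le_sum fun k _ => sub_le_card_offDiagPairs_filter_norm_sub_le hπ0 hcov hz _
  calc ∏ ij ∈ offDiagPairs n, ‖z ij.1 - z ij.2‖
      ≤ ∏ ij ∈ offDiagPairs n, ‖π‖ ^ #{k ∈ range K | ‖z ij.1 - z ij.2‖ ≤ ‖π‖ ^ (k + 1)} :=
        prod_le_prod (fun _ _ => norm_nonneg _) fun ij _ =>
          le_pow_card_filter_le_pow (hz1 ij) hπpos.le hπ1 K
    _ = ‖π‖ ^ ((∑ ij ∈ offDiagPairs n,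
          #{k ∈ range K | ‖z ij.1 - z ij.2‖ ≤ ‖π‖ ^ (k + 1)} : ℕ) : ℝ) := by
        rw [prod_pow_eq_pow_sum, Real.rpow_natCast]
    _ ≤ _ := Real.rpow_le_rpow_of_exponent_ge hπpos hπ1 hcount

end Bounds

lemma tendsto_nat_sqrt_atTop : Tendsto Nat.sqrt atTop atTop :=
  tendsto_atTop_atTop.2 fun b => ⟨b * b, fun _ hn => Nat.le_sqrt.2 hn⟩

lemma tendsto_nat_sqrt_div_atTop : Tendsto (fun n : ℕ => (Nat.sqrt n : ℝ) / n) atTop (𝓝 0) := by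
  refine squeeze_zero' (Eventually.of_forall fun n => by positivity) ?_
    (tendsto_inv_atTop_zero.comp (tendsto_natCast_atTop_atTop.comp tendsto_nat_sqrt_atTop))
  filter_upwards [eventually_ge_atTop 1] with n hn
  have hn : (1 : ℝ) ≤ n := by exact_mod_cast hn
  have hs : (0 : ℝ) < Nat.sqrt n := by exact_mod_cast Nat.sqrt_pos.2 (by exact_mod_cast hn)
  have hsq : (Nat.sqrt n : ℝ) * Nat.sqrt n ≤ n := by exact_mod_cast Nat.sqrt_le n
  rw [Function.comp_apply, Function.comp_apply, div_le_iff₀ (by linarith), inv_mul_eq_div,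
    le_div_iff₀ hs]
  linarith

lemma tendsto_dn_upper_exponent {Q : ℝ} (hQ : 1 < Q) :
    Tendsto (fun n : ℕ => ((n : ℝ) ^ 2 * ∑ k ∈ range (Nat.sqrt n), Q⁻¹ ^ (k + 1)
      - Nat.sqrt n * n) / (n * (n - 1))) atTop (𝓝 (Q - 1)⁻¹) := by
  have hlim := (tendsto_natCast_div_add_atTop (-1 : ℝ)).mul
    (((hasSum_inv_pow_succ hQ).tendsto_sum_nat.comp tendsto_nat_sqrt_atTop).sub
      tendsto_nat_sqrt_div_atTop)
  rw [one_mul, sub_zero] at hlim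
  refine hlim.congr' ?_
  filter_upwards [eventually_ge_atTop 2] with n hn
  have hn : (2 : ℝ) ≤ n := by exact_mod_cast hn
  have : (n : ℝ) - 1 ≠ 0 := by linarith
  have : (n : ℝ) ≠ 0 := by linarith
  simp only [Function.comp_apply, ← sub_eq_add_neg]
  field_simp

theorem tendsto_dn_closedBall {F : Type*} [NormedField F] [IsUltrametricDist F] {Q : ℕ}
    (hQ : 1 < Q) {τ : ℕ → F} (hτ : ∀ i < Q, ‖τ i‖ ≤ 1)
    (hsep : ∀ i < Q, ∀ j < Q, i ≠ j → ‖τ i - τ j‖ = 1)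
    {π : F} (hπ0 : π ≠ 0) (hπ1 : ‖π‖ < 1)
    (hcov : ∀ x : F, ‖x‖ ≤ 1 → ∃ i < Q, ‖x - τ i‖ ≤ ‖π‖) :
    Tendsto (dn {x : F | ‖x‖ ≤ 1}) atTop (𝓝 (‖π‖ ^ ((Q : ℝ) - 1)⁻¹)) := by
  have hupper := ((Real.continuousAt_const_rpow (norm_ne_zero_iff.2 hπ0)).tendsto).comp
    (tendsto_dn_upper_exponent (Q := (Q : ℝ)) (by exact_mod_cast hQ))
  refine tendsto_of_tendsto_of_tendsto_of_le_of_le' tendsto_const_nhds hupper ?_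
    (Eventually.of_forall fun n => dn_le_rpow_of_cover hπ0 hπ1.le hcov n (Nat.sqrt n))
  filter_upwards [eventually_ge_atTop 2] with n hn
  exact rpow_inv_sub_one_le_dn hQ hτ hsep hπ0 hπ1 hn

lemma norm_le_of_norm_lt_one {F : Type*} [NormedField F] {π : F} (hπ0 : 0 < ‖π‖) (hπ1 : ‖π‖ < 1)
    (hval : ∀ x : F, x ≠ 0 → ∃ k : ℤ, ‖x‖ = ‖π‖ ^ k) {x : F} (hx : ‖x‖ < 1) : ‖x‖ ≤ ‖π‖ := by
  rcases eq_or_ne x 0 with rfl | hx0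
  · simp [hπ0.le]
  obtain ⟨k, hk⟩ := hval x hx0
  rw [hk] at hx ⊢
  simpa using zpow_le_zpow_right_of_le_one₀ hπ0 hπ1.le
    ((zpow_lt_one_iff_right_of_lt_one₀ hπ0 hπ1).1 hx)

lemma norm_sub_eq_one_of_existsUnique {F : Type*} [NormedField F] [IsUltrametricDist F]
    {T : Finset F} (hT : ∀ t ∈ T, ‖t‖ ≤ 1) (huniq : ∀ x : F, ‖x‖ ≤ 1 → ∃! t, t ∈ T ∧ ‖x - t‖ < 1)
    {t t' : F} (ht : t ∈ T) (ht' : t' ∈ T) (hne : t ≠ t') : ‖t - t'‖ = 1 := by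
  refine le_antisymm ((norm_sub_le_max_norm _ _).trans (max_le (hT t ht) (hT t' ht'))) ?_
  by_contra! hlt
  exact hne ((huniq t (hT t ht)).unique ⟨ht, by simp⟩ ⟨ht', hlt⟩)

lemma rpow_rpow_rpow_eq_exp {p : ℝ} (hp : 0 < p) (e Q N : ℝ) :
    ((p ^ (-1 / e)) ^ (Q - 1)⁻¹) ^ N = Real.exp (-(N * Real.log p / (e * (Q - 1)))) := by
  rw [← Real.rpow_mul hp.le, ← Real.rpow_mul hp.le, Real.rpow_def_of_pos hp]
  congr 1
  simp only [div_eq_mul_inv, mul_inv]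
  ring

/-- Let `L_v/K_v` be a finite extension of nonarchimedean local fields with ramification
index `e`, inertia degree `f`, residue characteristic `p`, where `q` is the order of the
residue field of `K_v` (a power of `p`); `L_v` is realized as a nonarchimedean normed
field whose ring of integers `O = {x : ‖x‖ ≤ 1}` has uniformizer `π` of norm `p^{-1/e}`
and residue field of order `q^f`.  Then the transfinite diameter of `O` with respect to
the absolute value normalized by `N = N_v = [K_v:ℚ_v]/[K:ℚ]` (i.e. `|·| = ‖·‖^N`) equals
`exp(-N·log p /(e(q^f - 1)))`; in particular its logarithm is strictly negative. -/
theorem statement2 {F : Type*} [NormedField F]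
    (hna : ∀ x y : F, ‖x + y‖ ≤ max ‖x‖ ‖y‖)
    (p : ℕ) (hp : p.Prime) (e fdeg : ℕ) (he : 0 < e) (hf : 0 < fdeg)
    (q : ℕ) (hq : ∃ m : ℕ, 0 < m ∧ q = p ^ m)
    (π : F) (hπ : ‖π‖ = (p : ℝ) ^ (-(1 : ℝ) / e))
    (hval : ∀ x : F, x ≠ 0 → ∃ k : ℤ, ‖x‖ = ((p : ℝ) ^ (-(1 : ℝ) / e)) ^ k)
    (hres : ∃ T : Finset F, T.card = q ^ fdeg ∧ (∀ t ∈ T, ‖t‖ ≤ 1) ∧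
      ∀ x : F, ‖x‖ ≤ 1 → ∃! t, t ∈ T ∧ ‖x - t‖ < 1)
    (N : ℝ) (hN : 0 < N) :
    Filter.Tendsto (fun n => dn {x : F | ‖x‖ ≤ 1} n ^ N) Filter.atTop
      (nhds (Real.exp (-(N * Real.log p / (e * ((q : ℝ) ^ fdeg - 1))))))
    ∧ Real.log (Real.exp (-(N * Real.log p / (e * ((q : ℝ) ^ fdeg - 1))))) < 0 := by
  have := isUltrametricDist_of_forall_norm_add_le_max_norm hna
  have : Inhabited F := ⟨0⟩
  obtain ⟨T, hTcard, hT1, huniq⟩ := hres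
  obtain ⟨τ, hτT, hτinj, hτsurj⟩ := T.exists_bijOn_Iio_card
  rw [hTcard] at hτT hτinj hτsurj
  have hp1 : (1 : ℝ) < p := by exact_mod_cast hp.one_lt
  have hπpos : 0 < ‖π‖ := hπ ▸ Real.rpow_pos_of_pos (by linarith) _
  have hπ1 : ‖π‖ < 1 := hπ ▸ Real.rpow_lt_one_of_one_lt_of_neg hp1
    (div_neg_of_neg_of_pos (by norm_num) (by exact_mod_cast he))
  have hQ : 1 < q ^ fdeg := by
    obtain ⟨m, hm, rfl⟩ := hq
    exact Nat.one_lt_pow hf.ne' (Nat.one_lt_pow hm.ne' hp.one_lt)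
  simp_rw [← hπ] at hval
  have hcov (x : F) (hx : ‖x‖ ≤ 1) : ∃ i < q ^ fdeg, ‖x - τ i‖ ≤ ‖π‖ := by
    obtain ⟨_, ⟨ht, hxt⟩, -⟩ := huniq x hx
    obtain ⟨i, hi, rfl⟩ := hτsurj ht
    exact ⟨i, hi, norm_le_of_norm_lt_one hπpos hπ1 hval hxt⟩
  have hlim := tendsto_dn_closedBall hQ (fun i hi => hT1 _ (hτT hi))
    (fun i hi j hj hij => norm_sub_eq_one_of_existsUnique hT1 huniq (hτT hi) (hτT hj)
      (hτinj.ne hi hj hij)) (norm_pos_iff.1 hπpos) hπ1 hcov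
  have hvalue : (‖π‖ ^ (((q ^ fdeg : ℕ) : ℝ) - 1)⁻¹) ^ N =
      Real.exp (-(N * Real.log p / (e * ((q : ℝ) ^ fdeg - 1)))) := by
    rw [hπ, Nat.cast_pow]
    exact rpow_rpow_rpow_eq_exp (by linarith) _ _ _
  have hQR : (1 : ℝ) < (q : ℝ) ^ fdeg := by exact_mod_cast hQ
  refine ⟨hvalue ▸
    ((Real.continuousAt_rpow_const _ N (Or.inl (by positivity))).tendsto.comp hlim), ?_⟩
  have he' : (0 : ℝ) < e := by exact_mod_cast he
  rw [Real.log_exp, neg_lt_zero]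
  exact div_pos (mul_pos hN (Real.log_pos hp1)) (mul_pos he' (by linarith))
end

section
/- Let p be a prime and Z_p the ring of p-adic integers with the usual p-adic absolute value |·|_p. Then the transfinite diameter of Z_p equals p^{-1/(p-1)}. -/
section Aux

open Finset

variable {p : ℕ} [hp : Fact p.Prime]


lemma norm_natCast_eq (m : ℕ) (hm : m ≠ 0) :
    ‖(m : ℚ_[p])‖ = ((p : ℝ)⁻¹) ^ (padicValNat p m) := by
  have h1 : ((m : ℚ_[p])) = (((m : ℚ)) : ℚ_[p]) := by norm_cast
  rw [h1, Padic.eq_padicNorm,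
    padicNorm.eq_zpow_of_nonzero (by exact_mod_cast hm), padicValRat.of_nat]
  push_cast
  rw [padicValRat.of_nat, zpow_neg, zpow_natCast, ← inv_pow]

lemma norm_ascPochhammer_le' (k : ℕ) (z : ℚ_[p]) (hz : ‖z‖ ≤ 1) :
    ‖(ascPochhammer ℚ_[p] k).eval z‖ ≤ ‖((k.factorial : ℕ) : ℚ_[p])‖ := by
  set w : ℤ_[p] := ⟨z, hz⟩ with hw
  have he : (ascPochhammer ℚ_[p] k).eval z =
      (((ascPochhammer ℤ_[p] k).eval w : ℤ_[p]) : ℚ_[p]) := by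
    have : z = (PadicInt.Coe.ringHom (p := p)) w := rfl
    rw [this, ascPochhammer_eval₂ (PadicInt.Coe.ringHom (p := p)) k,
      Polynomial.eval₂_at_apply]
    rfl
  rw [he, ← PadicInt.norm_def]
  have := PadicInt.norm_ascPochhammer_le k w
  refine this.trans (le_of_eq ?_)
  rw [PadicInt.norm_def]
  norm_cast

lemma det_vandermonde_norm_le (n : ℕ) (z : Fin n → ℚ_[p]) (hz : ∀ i, ‖z i‖ ≤ 1) :
    ‖(Matrix.vandermonde z).det‖ ≤ ∏ j : Fin n, ‖(((j : ℕ).factorial : ℕ) : ℚ_[p])‖ := by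
  rw [Matrix.det_eval_matrixOfPolynomials_eq_det_vandermonde z
    (fun j => ascPochhammer ℚ_[p] (j : ℕ))
    (fun j => by simpa using ascPochhammer_natDegree (S := ℚ_[p]) (j : ℕ))
    (fun j => monic_ascPochhammer _ _),
    Matrix.det_apply]
  refine IsUltrametricDist.norm_sum_le_of_forall_le_of_nonneg
    (Finset.prod_nonneg fun _ _ => norm_nonneg _) ?_
  intro σ _
  have h1 : ‖Equiv.Perm.sign σ •
      ∏ i, (Matrix.of fun i j => ((ascPochhammer ℚ_[p] ((j : Fin n) : ℕ)).eval (z i))) (σ i) i‖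
      = ‖∏ i, (Matrix.of fun i j =>
        ((ascPochhammer ℚ_[p] ((j : Fin n) : ℕ)).eval (z i))) (σ i) i‖ := by
    rcases Int.units_eq_one_or (Equiv.Perm.sign σ) with h | h <;>
      simp [h, Units.smul_def]
  rw [h1, norm_prod]
  exact Finset.prod_le_prod (fun _ _ => norm_nonneg _)
    (fun i _ => norm_ascPochhammer_le' (i : ℕ) (z (σ i)) (hz _))

lemma prod_pairs_split {M : Type*} [CommMonoid M] (n : ℕ) (g : Fin n → Fin n → M)
    (hg : ∀ i j, g i j = g j i) :
    ∏ ij ∈ Finset.univ.filter (fun ij : Fin n × Fin n => ij.1 ≠ ij.2), g ij.1 ij.2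
      = (∏ i : Fin n, ∏ j ∈ Finset.Ioi i, g i j) ^ 2 := by
  have h1 : ∏ i : Fin n, ∏ j ∈ Finset.Ioi i, g i j
      = ∏ ij ∈ Finset.univ.filter (fun ij : Fin n × Fin n => ij.1 < ij.2), g ij.1 ij.2 := by
    rw [Finset.prod_sigma']
    refine Finset.prod_nbij' (fun x => (x.1, x.2)) (fun y => ⟨y.1, y.2⟩) ?_ ?_ ?_ ?_ ?_ <;>
      simp [Finset.mem_sigma, Finset.mem_Ioi]
  have h2 : ∏ ij ∈ Finset.univ.filter (fun ij : Fin n × Fin n => ij.2 < ij.1), g ij.1 ij.2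
      = ∏ ij ∈ Finset.univ.filter (fun ij : Fin n × Fin n => ij.1 < ij.2), g ij.1 ij.2 := by
    refine Finset.prod_nbij' (fun x => (x.2, x.1)) (fun y => (y.2, y.1)) ?_ ?_ ?_ ?_ ?_
    · intro a ha; simp only [Finset.mem_filter, Finset.mem_univ, true_and] at ha ⊢; exact ha
    · intro a ha; simp only [Finset.mem_filter, Finset.mem_univ, true_and] at ha ⊢; exact ha
    · intro a _; rfl
    · intro a _; rfl
    · intro a _; exact hg a.1 a.2
  have h3 : Finset.univ.filter (fun ij : Fin n × Fin n => ij.1 ≠ ij.2)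
      = Finset.univ.filter (fun ij : Fin n × Fin n => ij.1 < ij.2)
        ∪ Finset.univ.filter (fun ij : Fin n × Fin n => ij.2 < ij.1) := by
    ext ij
    simp only [Finset.mem_filter, Finset.mem_univ, true_and, Finset.mem_union]
    exact ne_iff_lt_or_gt
  have h4 : Disjoint (Finset.univ.filter (fun ij : Fin n × Fin n => ij.1 < ij.2))
      (Finset.univ.filter (fun ij : Fin n × Fin n => ij.2 < ij.1)) := by
    rw [Finset.disjoint_left]
    intro a ha hb
    simp only [Finset.mem_filter] at ha hb
    exact absurd ha.2 (not_lt_of_gt hb.2)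
  rw [h3, Finset.prod_union h4, h2, h1, sq]

lemma offdiag_prod_eq_det_sq (n : ℕ) (z : Fin n → ℚ_[p]) :
    ∏ ij ∈ Finset.univ.filter (fun ij : Fin n × Fin n => ij.1 ≠ ij.2), ‖z ij.1 - z ij.2‖
      = ‖(Matrix.vandermonde z).det‖ ^ 2 := by
  rw [prod_pairs_split n (fun i j => ‖z i - z j‖) (fun i j => norm_sub_rev _ _),
    Matrix.det_vandermonde]
  rw [norm_prod]
  congr 1
  refine Finset.prod_congr rfl fun i _ => ?_
  rw [norm_prod]
  exact Finset.prod_congr rfl fun j _ => norm_sub_rev _ _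

lemma superFactorial_pos (m : ℕ) : 0 < Nat.superFactorial m := by
  induction m with
  | zero => exact Nat.one_pos
  | succ k ih => exact Nat.mul_pos (Nat.factorial_pos _) ih

lemma padicValNat_superFactorial (m : ℕ) :
    padicValNat p (Nat.superFactorial m)
      = ∑ k ∈ Finset.range (m + 1), padicValNat p (k.factorial) := by
  induction m with
  | zero => simp
  | succ k ih =>
    rw [Nat.superFactorial_succ, padicValNat.mul (Nat.factorial_ne_zero _)
      (superFactorial_pos k).ne', ih, add_comm, Finset.sum_range_succ, Finset.sum_range_succ,
      Finset.sum_range_succ]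


lemma prod_fact_norm (n : ℕ) :
    ∏ j : Fin n, ‖(((j : ℕ).factorial : ℕ) : ℚ_[p])‖
      = ((p : ℝ)⁻¹) ^ (∑ k ∈ Finset.range n, padicValNat p k.factorial) := by
  rw [Fin.prod_univ_eq_prod_range (fun j => ‖((j.factorial : ℕ) : ℚ_[p])‖) n,
    ← Finset.prod_pow_eq_pow_sum]
  exact Finset.prod_congr rfl fun k _ => norm_natCast_eq _ (Nat.factorial_ne_zero k)

lemma dn_eq (n : ℕ) :
    dn {x : ℚ_[p] | ‖x‖ ≤ 1} n
      = (((p : ℝ)⁻¹) ^ (2 * ∑ k ∈ Finset.range n, padicValNat p k.factorial))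
        ^ (((n : ℝ) * ((n : ℝ) - 1))⁻¹) := by
  have hexp : (0 : ℝ) ≤ ((n : ℝ) * ((n : ℝ) - 1))⁻¹ := by
    rcases Nat.eq_zero_or_pos n with h | h
    · simp [h]
    · have : (1 : ℝ) ≤ (n : ℝ) := by exact_mod_cast h
      exact inv_nonneg.mpr (mul_nonneg (by linarith) (by linarith))
  apply IsGreatest.csSup_eq
  constructor
  · refine ⟨fun i => ((i : ℕ) : ℚ_[p]), fun i => ?_, ?_⟩
    · show ‖((i : ℕ) : ℚ_[p])‖ ≤ 1
      simpa using Padic.norm_int_le_one (p := p) ((i : ℕ) : ℤ)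
    · have hbase : ∏ ij ∈ Finset.univ.filter (fun ij : Fin n × Fin n => ij.1 ≠ ij.2),
          ‖((ij.1 : ℕ) : ℚ_[p]) - ((ij.2 : ℕ) : ℚ_[p])‖
          = ((p : ℝ)⁻¹) ^ (2 * ∑ k ∈ Finset.range n, padicValNat p k.factorial) := by
      
        rw [offdiag_prod_eq_det_sq n (fun i => ((i : ℕ) : ℚ_[p]))]
        cases n with
        | zero => simp [Matrix.det_fin_zero]
        | succ m =>
          have hfun : (fun i : Fin (m + 1) => ((i : ℕ) : ℚ_[p]))
              = fun i : Fin (m + 1) => (i : ℚ_[p]) := rfl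
          rw [hfun, Matrix.det_vandermonde_id_eq_superFactorial,
            norm_natCast_eq _ (superFactorial_pos m).ne', padicValNat_superFactorial,
            ← pow_mul, mul_comm]
      rw [hbase]
  · rintro x ⟨z, hzmem, rfl⟩
    refine Real.rpow_le_rpow (Finset.prod_nonneg fun _ _ => norm_nonneg _) ?_ hexp
    rw [offdiag_prod_eq_det_sq n z]
    have h := (det_vandermonde_norm_le n z hzmem).trans_eq (prod_fact_norm n)
    calc ‖(Matrix.vandermonde z).det‖ ^ 2
        ≤ (((p : ℝ)⁻¹) ^ (∑ k ∈ Finset.range n, padicValNat p k.factorial)) ^ 2 :=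
          pow_le_pow_left₀ (norm_nonneg _) h 2
      _ = _ := by rw [← pow_mul, mul_comm]

lemma key_nat (n : ℕ) :
    2 * ((p - 1) * ∑ k ∈ Finset.range n, padicValNat p k.factorial)
      + 2 * ∑ k ∈ Finset.range n, (p.digits k).sum = n * (n - 1) := by
  have hterm : ∀ k : ℕ, (p - 1) * padicValNat p k.factorial + (p.digits k).sum = k := by
    intro k
    rw [sub_one_mul_padicValNat_factorial k]
    exact Nat.sub_add_cancel (Nat.digit_sum_le p k)
  have h1 : (p - 1) * (∑ k ∈ Finset.range n, padicValNat p k.factorial)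
      + ∑ k ∈ Finset.range n, (p.digits k).sum = ∑ k ∈ Finset.range n, k := by
    rw [Finset.mul_sum, ← Finset.sum_add_distrib]
    exact Finset.sum_congr rfl fun k _ => hterm k
  have h2 := Finset.sum_range_id_mul_two n
  omega

lemma S_le (n : ℕ) :
    ∑ k ∈ Finset.range n, (p.digits k).sum ≤ n * ((Nat.log p n + 1) * (p - 1)) := by
  have h := Finset.sum_le_card_nsmul (Finset.range n) (fun k => (p.digits k).sum)
    ((Nat.log p n + 1) * (p - 1)) ?_
  · simpa [Finset.card_range, smul_eq_mul] using h
  · intro k hk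
    rcases Nat.eq_zero_or_pos k with rfl | hk0
    · simp
    · have hlen : (p.digits k).length = Nat.log p k + 1 :=
        Nat.digits_len p k hp.out.one_lt hk0.ne'
      have hsum : (p.digits k).sum ≤ (p.digits k).length * (p - 1) := by
        have := List.sum_le_card_nsmul (p.digits k) (p - 1) ?_
        · simpa [smul_eq_mul] using this
        · intro x hx
          have := Nat.digits_lt_base hp.out.one_lt hx
          omega
      refine hsum.trans ?_
      rw [hlen]
      have : Nat.log p k ≤ Nat.log p n :=
        Nat.log_mono_right (le_of_lt (Finset.mem_range.mp hk))
      exact Nat.mul_le_mul_right _ (by omega)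

open Filter Topology Asymptotics in
lemma F_tendsto (p : ℕ) : Tendsto (fun x : ℝ => 2 * (Real.logb p x + 1) / (x - 1)) atTop (𝓝 0) := by
  have h1 : (fun x : ℝ => 2 * (Real.logb p x + 1)) =o[atTop] (id : ℝ → ℝ) := by
    have ha : (fun x : ℝ => Real.logb p x) =o[atTop] (id : ℝ → ℝ) := by
      simp only [Real.logb, div_eq_inv_mul]
      exact Real.isLittleO_log_id_atTop.const_mul_left _
    have hb : (fun _ : ℝ => (1 : ℝ)) =o[atTop] (id : ℝ → ℝ) :=
      isLittleO_const_id_atTop 1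
    exact (ha.add hb).const_mul_left 2
  have h2 : (id : ℝ → ℝ) =O[atTop] (fun x : ℝ => x - 1) := by
    refine Asymptotics.IsBigO.of_bound 2 ?_
    filter_upwards [Filter.eventually_ge_atTop (2 : ℝ)] with x hx
    rw [id_eq, Real.norm_eq_abs, Real.norm_eq_abs, abs_of_nonneg (by linarith),
      abs_of_nonneg (by linarith)]
    linarith
  exact (h1.trans_isBigO h2).tendsto_div_nhds_zero


end Aux

open Filter Topology in
/-- The transfinite diameter of `ℤ_p` (the closed unit ball of `ℚ_p`) equals
`p^{-1/(p-1)}`. -/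
theorem statement4 (p : ℕ) [Fact p.Prime] :
    Filter.Tendsto (fun n => dn {x : ℚ_[p] | ‖x‖ ≤ 1} n) Filter.atTop
      (nhds ((p : ℝ) ^ (-(1 : ℝ) / (p - 1)))) := by
  have hp1 : (1 : ℝ) < p := by exact_mod_cast (Fact.out : p.Prime).one_lt
  have hppos : (0 : ℝ) < p := by linarith
  set V : ℕ → ℕ := fun n => ∑ k ∈ Finset.range n, padicValNat p k.factorial with hV
  set S : ℕ → ℕ := fun n => ∑ k ∈ Finset.range n, (p.digits k).sum with hS
  set e : ℕ → ℝ := fun n => 2 * (V n : ℝ) * ((n : ℝ) * ((n : ℝ) - 1))⁻¹ with he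
  have hdn : ∀ n, dn {x : ℚ_[p] | ‖x‖ ≤ 1} n = (p : ℝ) ^ (-(e n)) := by
    intro n
    rw [dn_eq n, ← Real.rpow_natCast ((p : ℝ)⁻¹) (2 * V n),
      ← Real.rpow_mul (by positivity), Real.inv_rpow (by positivity),
      ← Real.rpow_neg (by positivity)]
    congr 1
    push_cast
    ring
  have he2 : ∀ᶠ n in atTop, e n
      = 1 / ((p : ℝ) - 1) - 2 * (S n : ℝ) / (((p : ℝ) - 1) * ((n : ℝ) * ((n : ℝ) - 1))) := by
    filter_upwards [Filter.eventually_ge_atTop 2] with n hn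
    have hnR : (2 : ℝ) ≤ (n : ℝ) := by exact_mod_cast hn
    have hkey := key_nat (p := p) n
    have hcast : 2 * ((p : ℝ) - 1) * (V n : ℝ) + 2 * (S n : ℝ) = (n : ℝ) * ((n : ℝ) - 1) := by
      have h1 : ((2 * ((p - 1) * V n) + 2 * S n : ℕ) : ℝ) = ((n * (n - 1) : ℕ) : ℝ) := by
        exact_mod_cast congrArg (Nat.cast : ℕ → ℝ) hkey
      push_cast [Nat.cast_sub (Fact.out : p.Prime).one_le, Nat.cast_sub (by omega : 1 ≤ n)] at h1
      linarith
    have hne1 : ((p : ℝ) - 1) ≠ 0 := by linarith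
    have hne2 : ((n : ℝ)) ≠ 0 := by linarith
    have hne3 : ((n : ℝ) - 1) ≠ 0 := by linarith
    rw [he]
    field_simp
    linear_combination hcast
  have htFn : Tendsto (fun n : ℕ => 2 * (Real.logb p n + 1) / ((n : ℝ) - 1)) atTop (𝓝 0) :=
    (F_tendsto p).comp tendsto_natCast_atTop_atTop
  have hδ : Tendsto
      (fun n : ℕ => 2 * (S n : ℝ) / (((p : ℝ) - 1) * ((n : ℝ) * ((n : ℝ) - 1)))) atTop (𝓝 0) := by
    refine squeeze_zero' ?_ ?_ htFn
    · filter_upwards [Filter.eventually_ge_atTop 1] with n hn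
      have hnR : (1 : ℝ) ≤ (n : ℝ) := by exact_mod_cast hn
      apply div_nonneg (by positivity)
      exact mul_nonneg (by linarith) (mul_nonneg (by linarith) (by linarith))
    · filter_upwards [Filter.eventually_ge_atTop 2] with n hn
      have hnR : (2 : ℝ) ≤ (n : ℝ) := by exact_mod_cast hn
      have hS' : (S n : ℝ) ≤ (n : ℝ) * (((Nat.log p n : ℝ) + 1) * ((p : ℝ) - 1)) := by
        have h1 := S_le (p := p) n
        have h2 : ((∑ k ∈ Finset.range n, (p.digits k).sum : ℕ) : ℝ)
            ≤ ((n * ((Nat.log p n + 1) * (p - 1)) : ℕ) : ℝ) := by exact_mod_cast h1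
        rw [hS]
        push_cast [Nat.cast_sub (Fact.out : p.Prime).one_le] at h2 ⊢
        linarith
      have hlog : ((Nat.log p n : ℝ)) ≤ Real.logb p n := Real.natLog_le_logb n p
      rw [div_le_div_iff₀ (mul_pos (by linarith) (mul_pos (by linarith) (by linarith)))
        (by linarith)]
      nlinarith [mul_le_mul_of_nonneg_right hS' (by linarith : (0:ℝ) ≤ (n : ℝ) - 1),
        mul_le_mul_of_nonneg_right hlog (by nlinarith : (0:ℝ) ≤ ((p:ℝ) - 1) * ((n:ℝ) * ((n:ℝ) - 1)))]
  have hetend : Tendsto e atTop (𝓝 (1 / ((p : ℝ) - 1))) := by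
    have h0 : Tendsto (fun n : ℕ => 1 / ((p : ℝ) - 1)
        - 2 * (S n : ℝ) / (((p : ℝ) - 1) * ((n : ℝ) * ((n : ℝ) - 1)))) atTop
        (𝓝 (1 / ((p : ℝ) - 1))) := by
      simpa using tendsto_const_nhds.sub hδ
    exact Filter.Tendsto.congr' (he2.mono fun _ h => h.symm) h0
  have hcont : ContinuousAt (fun x : ℝ => (p : ℝ) ^ x) (-(1 / ((p : ℝ) - 1))) :=
    Real.continuousAt_const_rpow (by linarith)
  have hmain : Tendsto (fun n => (p : ℝ) ^ (-(e n))) atTop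
      (𝓝 ((p : ℝ) ^ (-(1 / ((p : ℝ) - 1))))) := hcont.tendsto.comp hetend.neg
  have hfinal : -(1 / ((p : ℝ) - 1)) = -(1 : ℝ) / ((p : ℝ) - 1) := by ring
  rw [hfinal] at hmain
  exact hmain.congr (fun n => (hdn n).symm)
end

section
/- For any prime p and any n points z_1,...,z_n in Z_p, there exist at least ⌈n/p⌉ points in a common residue class mod p, and hence Π_{i≠j}|z_i−z_j|_p ≤ p^{−⌈n/p⌉(⌈n/p⌉−1)}. -/
open Finset


/-- For any `n` points `z_1, …, z_n ∈ ℤ_p`, by pigeonhole at least `⌈n/p⌉` of them lie in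
a common residue class mod `p`, and hence
`∏_{i≠j} |z_i - z_j|_p ≤ p^{-⌈n/p⌉(⌈n/p⌉ - 1)}` (product over ordered pairs `i ≠ j`). -/
theorem statement5 (p : ℕ) [Fact p.Prime] (n : ℕ) (z : Fin n → ℤ_[p]) :
    (∃ s : Finset (Fin n), (n + p - 1) / p ≤ s.card ∧
        ∀ i ∈ s, ∀ j ∈ s, ‖z i - z j‖ ≤ (p : ℝ)⁻¹) ∧
      (∏ ij ∈ Finset.univ.filter (fun ij : Fin n × Fin n => ij.1 ≠ ij.2),
          ‖z ij.1 - z ij.2‖) ≤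
        (p : ℝ) ^ (-((((n + p - 1) / p : ℕ) : ℝ) * ((((n + p - 1) / p : ℕ) : ℝ) - 1))) := by
  have hp := (Fact.out : p.Prime)
  set k := (n + p - 1) / p with hk
  -- step 1: find a set s₀ of card ≥ k in a common residue class
  have key : ∃ s : Finset (Fin n), k ≤ s.card ∧
      ∀ i ∈ s, ∀ j ∈ s, ‖z i - z j‖ ≤ (p : ℝ)⁻¹ := by
    rcases Nat.eq_zero_or_pos k with hk0 | hk0
    · exact ⟨∅, by simp [hk0]⟩
    · have hn : 0 < n := by
        by_contra h
        have hn0 : n = 0 := by omega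
        subst hn0
        have : k = 0 := by
          rw [hk]
          exact Nat.div_eq_of_lt (by have := hp.pos; omega)
        omega
      haveI : NeZero p := ⟨hp.ne_zero⟩
      haveI : Nonempty (Fin n) := ⟨⟨0, hn⟩⟩
      have hlt : Fintype.card (ZMod p) * (k - 1) < Fintype.card (Fin n) := by
        simp only [ZMod.card, Fintype.card_fin]
        have ha : k * p ≤ n + p - 1 := Nat.div_mul_le_self _ _
        have hb : p * (k - 1) = k * p - p := by
          rw [Nat.mul_sub, mul_comm, mul_one]
        have := hp.one_lt
        omega
      obtain ⟨y, hy⟩ := Fintype.exists_lt_card_fiber_of_mul_lt_card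
        (fun i => PadicInt.toZMod (z i)) hlt
      refine ⟨univ.filter fun i => PadicInt.toZMod (z i) = y, by omega, ?_⟩
      intro i hi j hj
      simp only [mem_filter] at hi hj
      have hmem : z i - z j ∈ Ideal.span {(p : ℤ_[p]) ^ 1} := by
        rw [pow_one, ← PadicInt.maximalIdeal_eq_span_p, ← PadicInt.ker_toZMod,
          RingHom.mem_ker, map_sub, hi.2, hj.2, sub_self]
      have := (PadicInt.norm_le_pow_iff_mem_span_pow (z i - z j) 1).mpr hmem
      simpa [zpow_neg_one] using this
  obtain ⟨s₀, hs₀card, hs₀⟩ := key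
  obtain ⟨s, hss, hscard⟩ := Finset.exists_subset_card_eq hs₀card
  have hs : ∀ i ∈ s, ∀ j ∈ s, ‖z i - z j‖ ≤ (p : ℝ)⁻¹ :=
    fun i hi j hj => hs₀ i (hss hi) j (hss hj)
  refine ⟨⟨s, hscard.ge, hs⟩, ?_⟩
  -- step 2: the product bound
  have hsub : s.offDiag ⊆ univ.filter (fun ij : Fin n × Fin n => ij.1 ≠ ij.2) := by
    intro ij hij
    rw [Finset.mem_offDiag] at hij
    simp [hij.2.2]
  have h1 : (∏ ij ∈ Finset.univ.filter (fun ij : Fin n × Fin n => ij.1 ≠ ij.2),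
      ‖z ij.1 - z ij.2‖) ≤ ∏ ij ∈ s.offDiag, ‖z ij.1 - z ij.2‖ := by
    rw [← Finset.prod_sdiff hsub]
    have hle1 : (∏ ij ∈ (univ.filter (fun ij : Fin n × Fin n => ij.1 ≠ ij.2)) \ s.offDiag,
        ‖z ij.1 - z ij.2‖) ≤ 1 :=
      Finset.prod_le_one (fun _ _ => norm_nonneg _) (fun ij _ => PadicInt.norm_le_one _)
    have hnn : (0:ℝ) ≤ ∏ ij ∈ s.offDiag, ‖z ij.1 - z ij.2‖ :=
      Finset.prod_nonneg fun _ _ => norm_nonneg _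
    have hnn2 : (0:ℝ) ≤ ∏ ij ∈ (univ.filter (fun ij : Fin n × Fin n => ij.1 ≠ ij.2)) \ s.offDiag,
        ‖z ij.1 - z ij.2‖ := Finset.prod_nonneg fun _ _ => norm_nonneg _
    nlinarith
  have h2 : (∏ ij ∈ s.offDiag, ‖z ij.1 - z ij.2‖) ≤ ((p:ℝ)⁻¹) ^ (k * k - k) := by
    calc (∏ ij ∈ s.offDiag, ‖z ij.1 - z ij.2‖) ≤ ∏ _ij ∈ s.offDiag, (p:ℝ)⁻¹ :=
          Finset.prod_le_prod (fun _ _ => norm_nonneg _) (fun ij hij => by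
            rw [Finset.mem_offDiag] at hij
            exact hs _ hij.1 _ hij.2.1)
      _ = ((p:ℝ)⁻¹) ^ (k * k - k) := by rw [Finset.prod_const, Finset.offDiag_card, hscard]
  refine h1.trans (h2.trans ?_)
  have hp0 : (0:ℝ) < p := by exact_mod_cast hp.pos
  have hkk : k ≤ k * k := by nlinarith
  have hm : ((k * k - k : ℕ) : ℝ) = (k : ℝ) * ((k : ℝ) - 1) := by
    push_cast [hkk]
    ring
  rw [← hm, Real.rpow_neg hp0.le, Real.rpow_natCast, inv_pow]
end

section
/- Let α be an algebraic number of degree n ≥ 2 over a number field K with K-Galois conjugates α_1,...,α_n, and let v be a nonarchimedean place of K. Then (1/(n(n−1)))·Σ_{i≠j} (log⁺|α_i|_v + log⁺|α_j|_v − log|α_i−α_j|_v) ≥ 0, i.e. the average of the nonarchimedean pairing g_v(α_i,α_j) over distinct pairs of conjugates is nonnegative. -/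
/-- Baker's reformulation of Mahler's inequality, nonarchimedean case: if `α` has degree
`n ≥ 2` over a number field `K` with `K`-Galois conjugates `α_1, …, α_n` (realized as the
roots of its minimal polynomial in a nonarchimedean normed field `Lv` via an embedding
`σ : K →+* Lv`), and `|·|_v = ‖·‖^{N_v}` is the normalized absolute value at the
nonarchimedean place `v`, then the average over ordered pairs `i ≠ j` of
`g_v(α_i, α_j) = log⁺|α_i|_v + log⁺|α_j|_v - log|α_i - α_j|_v` is nonnegative. -/
theorem statement6 (K : Type*) [Field K] [NumberField K]
    (Lv : Type*) [NormedField Lv]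
    (hna : ∀ x y : Lv, ‖x + y‖ ≤ max ‖x‖ ‖y‖)
    (σ : K →+* Lv) (Nv : ℝ) (hNv : 0 < Nv)
    (A : Type*) [Field A] [Algebra K A] (α : A)
    (n : ℕ) (hn : 2 ≤ n) (hdeg : (minpoly K α).natDegree = n)
    (z : Fin n → Lv)
    (hz : Multiset.map z Finset.univ.val = ((minpoly K α).map σ).roots) :
    0 ≤ (1 / ((n : ℝ) * (n - 1))) *
      ∑ ij ∈ Finset.univ.filter (fun ij : Fin n × Fin n => ij.1 ≠ ij.2),
        (max 0 (Nv * Real.log ‖z ij.1‖) + max 0 (Nv * Real.log ‖z ij.2‖)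
          - Nv * Real.log ‖z ij.1 - z ij.2‖) := by
  apply mul_nonneg
  · apply one_div_nonneg.mpr
    have : (2 : ℝ) ≤ (n : ℝ) := by exact_mod_cast hn
    nlinarith
  · apply Finset.sum_nonneg
    intro ij _
    set x := z ij.1
    set y := z ij.2
    have hmax1 : (0 : ℝ) ≤ max 0 (Nv * Real.log ‖x‖) := le_max_left _ _
    have hmax2 : (0 : ℝ) ≤ max 0 (Nv * Real.log ‖y‖) := le_max_left _ _
    have key : Nv * Real.log ‖x - y‖ ≤
        max 0 (Nv * Real.log ‖x‖) + max 0 (Nv * Real.log ‖y‖) := by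
      by_cases hxy : x - y = 0
      · simp [hxy, hmax1, hmax2, add_nonneg hmax1 hmax2]
      · have hpos : 0 < ‖x - y‖ := norm_pos_iff.mpr hxy
        have hle : ‖x - y‖ ≤ max ‖x‖ ‖y‖ := by
          have := hna x (-y)
          simpa [sub_eq_add_neg] using this
        rcases le_total ‖x‖ ‖y‖ with h | h
        · have h1 : ‖x - y‖ ≤ ‖y‖ := le_trans hle (by simp [max_eq_right h])
          have h2 : Real.log ‖x - y‖ ≤ Real.log ‖y‖ := Real.log_le_log hpos h1
          have h3 : Nv * Real.log ‖x - y‖ ≤ Nv * Real.log ‖y‖ :=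
            mul_le_mul_of_nonneg_left h2 hNv.le
          calc Nv * Real.log ‖x - y‖ ≤ Nv * Real.log ‖y‖ := h3
            _ ≤ max 0 (Nv * Real.log ‖y‖) := le_max_right _ _
            _ ≤ _ := le_add_of_nonneg_left hmax1
        · have h1 : ‖x - y‖ ≤ ‖x‖ := le_trans hle (by simp [max_eq_left h])
          have h2 : Real.log ‖x - y‖ ≤ Real.log ‖x‖ := Real.log_le_log hpos h1
          have h3 : Nv * Real.log ‖x - y‖ ≤ Nv * Real.log ‖x‖ :=
            mul_le_mul_of_nonneg_left h2 hNv.le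
        
          calc Nv * Real.log ‖x - y‖ ≤ Nv * Real.log ‖x‖ := h3
            _ ≤ max 0 (Nv * Real.log ‖x‖) := le_max_right _ _
            _ ≤ _ := le_add_of_nonneg_right hmax2
    linarith
end

section
/- Let α be an algebraic number of degree n ≥ 2 over a number field K with conjugates α_1,...,α_n, and let v be an archimedean place of K with N_v = [K_v:Q_v]/[K:Q]. Then (1/(n(n−1)))·Σ_{i≠j} (log⁺|α_i|_v + log⁺|α_j|_v − log|α_i−α_j|_v) ≥ −N_v·(log n)/(n−1). -/
/-!
The Vandermonde determinant of the conjugates has absolute value `∏_{i<j} |α_i - α_j|`. By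
Hadamard's inequality it is at most the product of the Euclidean norms of its rows
`(1, α_i, …, α_i^{n-1})`, each of which is at most `√n · max(1, |α_i|)^{n-1}`. Taking logarithms,
`∑_{i<j} log |α_i - α_j| ≤ (n/2) log n + (n-1) ∑_i log⁺ |α_i|`. In the sum over ordered pairs
`i ≠ j` every `log⁺ |α_i|` occurs `2(n-1)` times and every `log |α_i - α_j|` twice, so that sum is
at least `-n log n`; multiplying by `N_v ≥ 0` and dividing by `n(n-1)` gives the claim.
-/

open Finset Real

section Hadamard

variable {𝕜 E ι : Type*} [RCLike 𝕜] [NormedAddCommGroup E] [InnerProductSpace 𝕜 E]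
  [Fintype ι] [LinearOrder ι] [LocallyFiniteOrderBot ι]

theorem OrthonormalBasis.norm_det_le_prod_norm (e : OrthonormalBasis ι 𝕜 E) (v : ι → E) :
    ‖e.toBasis.det v‖ ≤ ∏ i, ‖v i‖ := by
  have := Module.Finite.of_basis e.toBasis
  have hdim := Module.finrank_eq_card_basis e.toBasis
  let b := InnerProductSpace.gramSchmidtOrthonormalBasis hdim v
  calc ‖e.toBasis.det v‖ = ‖e.toBasis.det b.toBasis‖ * ‖b.toBasis.det v‖ := by
        rw [← norm_mul, Module.Basis.det_apply, Module.Basis.det_apply, Module.Basis.det_apply,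
          ← Matrix.det_mul, Module.Basis.toMatrix_mul_toMatrix]
    _ = ‖∏ i, inner 𝕜 (b i) (v i)‖ := by
        rw [b.coe_toBasis, e.det_to_matrix_orthonormalBasis, one_mul,
          InnerProductSpace.gramSchmidtOrthonormalBasis_det hdim v]
    _ ≤ ∏ i, ‖v i‖ := by
        rw [norm_prod]
        gcongr with i
        simpa [b.orthonormal.1 i] using norm_inner_le_norm (𝕜 := 𝕜) (b i) (v i)

theorem Matrix.norm_det_le_prod_norm_row (A : Matrix ι ι 𝕜) :
    ‖A.det‖ ≤ ∏ i, ‖WithLp.toLp 2 (A i)‖ := by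
  have h := (EuclideanSpace.basisFun ι 𝕜).norm_det_le_prod_norm (fun i ↦ WithLp.toLp 2 (A i))
  rwa [Module.Basis.det_apply, ← Matrix.det_transpose] at h

end Hadamard

section Vandermonde

variable {𝕜 : Type*} [RCLike 𝕜] {n : ℕ}

theorem norm_toLp_powers_le (x : 𝕜) :
    ‖WithLp.toLp 2 (fun j : Fin n ↦ x ^ (j : ℕ))‖ ≤ √n * max 1 ‖x‖ ^ (n - 1) := by
  have hpow (j : Fin n) : ‖x ^ (j : ℕ)‖ ≤ max 1 ‖x‖ ^ (n - 1) := by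
    rw [norm_pow]
    calc ‖x‖ ^ (j : ℕ) ≤ max 1 ‖x‖ ^ (j : ℕ) := by gcongr; exact le_max_right _ _
      _ ≤ max 1 ‖x‖ ^ (n - 1) := pow_le_pow_right₀ (le_max_left _ _) (by omega)
  calc ‖WithLp.toLp 2 (fun j : Fin n ↦ x ^ (j : ℕ))‖ = √(∑ j : Fin n, ‖x ^ (j : ℕ)‖ ^ 2) :=
        EuclideanSpace.norm_eq _
    _ ≤ √(∑ _j : Fin n, (max 1 ‖x‖ ^ (n - 1)) ^ 2) := by gcongr with j; exact hpow j
    _ = √n * max 1 ‖x‖ ^ (n - 1) := by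
        rw [sum_const, card_univ, Fintype.card_fin, nsmul_eq_mul, sqrt_mul (Nat.cast_nonneg n),
          sqrt_sq (by positivity)]

theorem Matrix.norm_det_vandermonde_le (z : Fin n → 𝕜) :
    ‖(vandermonde z).det‖ ≤ ∏ i, √n * max 1 ‖z i‖ ^ (n - 1) :=
  (norm_det_le_prod_norm_row _).trans <|
    prod_le_prod (fun _ _ ↦ norm_nonneg _) fun i _ ↦ norm_toLp_powers_le (z i)

theorem sum_log_norm_sub_le_of_injective {z : Fin n → 𝕜} (hz : Function.Injective z) :
    ∑ i, ∑ j ∈ Ioi i, log ‖z j - z i‖ ≤ n * log n / 2 + (n - 1 : ℕ) * ∑ i, log⁺ ‖z i‖ := by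
  have hne (i j : Fin n) (hj : j ∈ Ioi i) : ‖z j - z i‖ ≠ 0 := by
    simpa [sub_eq_zero] using hz.ne (mem_Ioi.1 hj).ne'
  have hdet : 0 < ‖(Matrix.vandermonde z).det‖ :=
    norm_pos_iff.2 (Matrix.det_vandermonde_ne_zero_iff.2 hz)
  calc ∑ i, ∑ j ∈ Ioi i, log ‖z j - z i‖ = log ‖(Matrix.vandermonde z).det‖ := by
        rw [Matrix.det_vandermonde, norm_prod,
          log_prod fun i _ ↦ by simpa [norm_prod, prod_ne_zero_iff] using hne i]
        simp only [norm_prod]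
        exact sum_congr rfl fun i _ ↦ (log_prod (hne i)).symm
    _ ≤ log (∏ i, √n * max 1 ‖z i‖ ^ (n - 1)) := log_le_log hdet (Matrix.norm_det_vandermonde_le z)
    _ = n * log n / 2 + (n - 1 : ℕ) * ∑ i, log⁺ ‖z i‖ := by
        have hterm (i : Fin n) :
            log (√n * max 1 ‖z i‖ ^ (n - 1)) = log n / 2 + (n - 1 : ℕ) * log⁺ ‖z i‖ := by
          have hn : (0 : ℝ) < n := Nat.cast_pos.2 i.pos
          rw [log_mul (by positivity) (by positivity), log_sqrt hn.le, log_pow,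
            posLog_eq_log_max_one (norm_nonneg _)]
        rw [log_prod fun i _ ↦ (mul_pos (sqrt_pos.2 (Nat.cast_pos.2 i.pos)) (by positivity)).ne',
          sum_congr rfl fun i _ ↦ hterm i, sum_add_distrib,
          sum_const, card_univ, Fintype.card_fin, nsmul_eq_mul, mul_sum]
        ring

end Vandermonde

section OffDiagonal

variable {ι M : Type*} [Fintype ι] [AddCommMonoid M]

theorem sum_filter_ne_fst [DecidableEq ι] (g : ι → M) :
    ∑ ij ∈ univ.filter (fun ij : ι × ι ↦ ij.1 ≠ ij.2), g ij.1 =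
      (Fintype.card ι - 1) • ∑ i, g i := by
  rw [sum_filter, Fintype.sum_prod_type, smul_sum]
  refine sum_congr rfl fun i _ ↦ ?_
  simp only [← sum_filter, filter_ne, sum_const, card_erase_of_mem (mem_univ i), card_univ]

theorem sum_filter_ne_snd [DecidableEq ι] (g : ι → M) :
    ∑ ij ∈ univ.filter (fun ij : ι × ι ↦ ij.1 ≠ ij.2), g ij.2 =
      (Fintype.card ι - 1) • ∑ i, g i := by
  rw [← sum_filter_ne_fst]
  exact sum_equiv (Equiv.prodComm ι ι) (by simp [eq_comm]) (by simp)

theorem sum_filter_ne_of_symm [LinearOrder ι] [LocallyFiniteOrderTop ι] (f : ι → ι → M)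
    (hf : ∀ i j, f i j = f j i) :
    ∑ ij ∈ univ.filter (fun ij : ι × ι ↦ ij.1 ≠ ij.2), f ij.1 ij.2 =
      2 • ∑ i, ∑ j ∈ Ioi i, f i j := by
  have hlt : ∑ ij ∈ univ.filter (fun ij : ι × ι ↦ ij.1 < ij.2), f ij.1 ij.2 =
      ∑ i, ∑ j ∈ Ioi i, f i j := by
    rw [sum_filter, Fintype.sum_prod_type]
    exact sum_congr rfl fun i _ ↦ by rw [← sum_filter, filter_lt_eq_Ioi]
  have hgt : ∑ ij ∈ univ.filter (fun ij : ι × ι ↦ ij.2 < ij.1), f ij.1 ij.2 =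
      ∑ ij ∈ univ.filter (fun ij : ι × ι ↦ ij.1 < ij.2), f ij.1 ij.2 :=
    sum_equiv (Equiv.prodComm ι ι) (by simp) (by simp [hf])
  have hsplit : univ.filter (fun ij : ι × ι ↦ ij.1 ≠ ij.2) =
      univ.filter (fun ij : ι × ι ↦ ij.1 < ij.2) ∪ univ.filter (fun ij : ι × ι ↦ ij.2 < ij.1) := by
    ext; simp only [mem_filter, mem_union, mem_univ, true_and, ne_iff_lt_or_gt]
  rw [hsplit, sum_union (disjoint_filter.2 fun _ _ h₁ h₂ ↦ h₁.asymm h₂), hgt, hlt, two_nsmul]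

end OffDiagonal

theorem neg_mul_log_le_sum_posLog_add_posLog_sub_log_norm_sub {𝕜 : Type*} [RCLike 𝕜] {n : ℕ}
    {z : Fin n → 𝕜} (hz : Function.Injective z) :
    -(n * log n) ≤ ∑ ij ∈ univ.filter (fun ij : Fin n × Fin n ↦ ij.1 ≠ ij.2),
      (log⁺ ‖z ij.1‖ + log⁺ ‖z ij.2‖ - log ‖z ij.1 - z ij.2‖) := by
  have hdisc := sum_log_norm_sub_le_of_injective hz
  simp only [fun i j ↦ norm_sub_rev (z j) (z i)] at hdisc
  rw [sum_sub_distrib, sum_add_distrib, sum_filter_ne_fst (fun i ↦ log⁺ ‖z i‖),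
    sum_filter_ne_snd (fun i ↦ log⁺ ‖z i‖),
    sum_filter_ne_of_symm (fun i j ↦ log ‖z i - z j‖) fun i j ↦ by rw [norm_sub_rev],
    Fintype.card_fin, nsmul_eq_mul, nsmul_eq_mul]
  push_cast
  linarith

theorem Polynomial.nodup_roots_map_minpoly {K A L : Type*} [Field K] [PerfectField K]
    [CommRing A] [IsDomain A] [Algebra K A] [CommRing L] [IsDomain L] (φ : K →+* L) (α : A) :
    ((minpoly K α).map φ).roots.Nodup := by
  by_cases hα : IsIntegral K α
  · exact nodup_roots (PerfectField.separable_of_irreducible (minpoly.irreducible hα)).map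
  · simp [minpoly.eq_zero hα]

open Classical

theorem statement7_general (K : Type*) [Field K] [NumberField K] (φ : K →+* ℂ)
    (A : Type*) [Field A] [Algebra K A] (α : A)
    (n : ℕ) (hn : 2 ≤ n)
    (Nv : ℝ)
    (hNv : Nv = (if ∀ x : K, (φ x).im = 0 then 1 else 2) / (Module.finrank ℚ K : ℝ))
    (z : Fin n → ℂ)
    (hz : Multiset.map z Finset.univ.val = ((minpoly K α).map φ).roots) :
    -(Nv * Real.log n / ((n : ℝ) - 1)) ≤ (1 / ((n : ℝ) * (n - 1))) *
      ∑ ij ∈ Finset.univ.filter (fun ij : Fin n × Fin n => ij.1 ≠ ij.2),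
        (max 0 (Nv * Real.log (‖z ij.1‖))
          + max 0 (Nv * Real.log (‖z ij.2‖))
          - Nv * Real.log (‖z ij.1 - z ij.2‖)) := by
  have hNv0 : 0 ≤ Nv := by rw [hNv]; split_ifs <;> positivity
  have hinj : Function.Injective z := fun i j hij ↦
    Multiset.inj_on_of_nodup_map (hz ▸ Polynomial.nodup_roots_map_minpoly φ α)
      i (mem_univ i) j (mem_univ j) hij
  have hpos : (0 : ℝ) < n * (n - 1) := by
    have : (2 : ℝ) ≤ n := by exact_mod_cast hn
    nlinarith
  have hmax (x : ℝ) : max 0 (Nv * log x) = Nv * log⁺ x := by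
    rw [posLog, mul_max_of_nonneg _ _ hNv0, mul_zero]
  simp only [hmax, ← mul_add, ← mul_sub, ← mul_sum]
  calc -(Nv * log n / (n - 1)) = 1 / (n * (n - 1)) * (Nv * -(n * log n)) := by
        field_simp
    _ ≤ _ := mul_le_mul_of_nonneg_left (mul_le_mul_of_nonneg_left
        (neg_mul_log_le_sum_posLog_add_posLog_sub_log_norm_sub hinj) hNv0) (one_div_pos.2 hpos).le

/-- Baker's archimedean Mahler-type discriminant inequality: if `α` has degree `n ≥ 2`
over a number field `K` with conjugates `α_1, …, α_n` (realized as the roots in `ℂ` of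
its minimal polynomial under an archimedean embedding `φ : K →+* ℂ`), and
`N_v = [K_v : ℚ_v]/[K : ℚ]` is the local degree of the corresponding archimedean place
(`[K_v : ℝ] = 1` for a real embedding, `2` for a complex one), then the average over
ordered pairs `i ≠ j` of `log⁺|α_i|_v + log⁺|α_j|_v - log|α_i - α_j|_v`, where
`|·|_v = |·|^{N_v}`, is at least `-N_v · (log n)/(n-1)`. -/
theorem statement7 (K : Type*) [Field K] [NumberField K] (φ : K →+* ℂ)
    (A : Type*) [Field A] [Algebra K A] (α : A)
    (n : ℕ) (hn : 2 ≤ n) (hdeg : (minpoly K α).natDegree = n)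
    (Nv : ℝ)
    (hNv : Nv = (if ∀ x : K, (φ x).im = 0 then 1 else 2) / (Module.finrank ℚ K : ℝ))
    (z : Fin n → ℂ)
    (hz : Multiset.map z Finset.univ.val = ((minpoly K α).map φ).roots) :
    -(Nv * Real.log n / ((n : ℝ) - 1)) ≤ (1 / ((n : ℝ) * (n - 1))) *
      ∑ ij ∈ Finset.univ.filter (fun ij : Fin n × Fin n => ij.1 ≠ ij.2),
        (max 0 (Nv * Real.log (‖z ij.1‖))
          + max 0 (Nv * Real.log (‖z ij.2‖))
          - Nv * Real.log (‖z ij.1 - z ij.2‖)) :=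
  statement7_general K φ A α n hn Nv hNv z hz
end

section
/- Let α be an algebraic integer of degree n over Q, totally p-adic for a prime p, with conjugates α_1,...,α_n viewed in Z_p. Then Π_{i≠j}|α_i−α_j|_p ≤ d_n(Z_p)^{n(n−1)}, where d_n(Z_p) is the n-th diameter of Z_p, and, combined with integrality of the discriminant, Π_{w | ∞} Π_{i≠j}|α_i−α_j|_w ≥ d_n(Z_p)^{−n(n−1)}. -/
open Polynomial

lemma aux19_derivative_finset_prod {L : Type*} [CommRing L] {ι : Type*} [DecidableEq ι]
    (s : Finset ι) (f : ι → L[X]) :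
    Polynomial.derivative (∏ j ∈ s, f j)
      = ∑ b ∈ s, (∏ a ∈ s.erase b, f a) * Polynomial.derivative (f b) := by
  induction s using Finset.induction with
  | empty => simp
  | @insert a s ha ih =>
    rw [Finset.prod_insert ha, derivative_mul, ih, Finset.mul_sum, Finset.sum_insert ha,
      Finset.erase_insert ha]
    congr 1
    · exact mul_comm _ _
    · refine Finset.sum_congr rfl fun b hb => ?_
      rw [Finset.erase_insert_of_ne (fun h : a = b => ha (h.symm ▸ hb)), Finset.prod_insert
        (fun h => ha (Finset.mem_of_mem_erase h)), mul_assoc]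

lemma aux19_pairs {L : Type*} [CommRing L] [IsDomain L] {n : ℕ} (y : Fin n → L) :
    ∏ ij ∈ Finset.univ.filter (fun ij : Fin n × Fin n => ij.1 ≠ ij.2), (y ij.1 - y ij.2)
      = ∏ i, Polynomial.eval (y i) (Polynomial.derivative (∏ j, (X - C (y j)))) := by
  have heval : ∀ i, Polynomial.eval (y i) (Polynomial.derivative (∏ j, (X - C (y j))))
      = ∏ j ∈ Finset.univ.erase i, (y i - y j) := by
    intro i
    rw [aux19_derivative_finset_prod, eval_finset_sum, Finset.sum_eq_single i]
    · simp [eval_prod]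
    · intro k _ hki
      rw [eval_mul, eval_prod,
        Finset.prod_eq_zero (Finset.mem_erase.2 ⟨Ne.symm hki, Finset.mem_univ i⟩)]
      · simp
      · simp
    · simp
  rw [Finset.prod_filter, Fintype.prod_prod_type]
  refine Finset.prod_congr rfl fun i _ => ?_
  rw [heval i, ← Finset.prod_filter, Finset.filter_ne]

lemma aux19_norm_algclosed {L : Type*} [Field L] [Algebra ℚ L] [IsAlgClosed L]
    (f : ℚ[X]) [Fact (Irreducible f)] (hf0 : f ≠ 0) (hsep : f.Separable) (g : ℚ[X]) :
    algebraMap ℚ L (Algebra.norm ℚ (Polynomial.aeval (AdjoinRoot.root f) g))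
      = ((f.aroots L).map fun r => Polynomial.eval r (g.map (algebraMap ℚ L))).prod := by
  classical
  haveI : FiniteDimensional ℚ (AdjoinRoot f) := (AdjoinRoot.powerBasis hf0).finite
  rw [Algebra.norm_eq_prod_embeddings]
  have h1 : ∀ σ : AdjoinRoot f →ₐ[ℚ] L, σ (Polynomial.aeval (AdjoinRoot.root f) g)
      = Polynomial.eval (σ (AdjoinRoot.root f)) (g.map (algebraMap ℚ L)) := by
    intro σ
    rw [Polynomial.eval_map, ← aeval_def, aeval_algHom_apply]
  have hnodup : (f.aroots L).Nodup :=
    Polynomial.nodup_roots (hsep.map (f := algebraMap ℚ L))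
  have he : ∀ σ : AdjoinRoot f →ₐ[ℚ] L,
      ((AdjoinRoot.equiv L ℚ f hf0 σ : { x // x ∈ f.aroots L }) : L)
      = σ (AdjoinRoot.root f) := by
    intro σ
    simp [AdjoinRoot.equiv, PowerBasis.liftEquiv', PowerBasis.liftEquiv,
      AdjoinRoot.powerBasis_gen]
    rfl
  calc ∏ σ : AdjoinRoot f →ₐ[ℚ] L, σ (Polynomial.aeval (AdjoinRoot.root f) g)
      = ∏ r : { x // x ∈ f.aroots L },
          Polynomial.eval (r : L) (g.map (algebraMap ℚ L)) := by
        refine Fintype.prod_equiv (AdjoinRoot.equiv L ℚ f hf0) _ _ fun σ => ?_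
        rw [h1 σ, he σ]
    _ = ∏ r ∈ (f.aroots L).toFinset,
          Polynomial.eval r (g.map (algebraMap ℚ L)) := by
        rw [← Finset.prod_coe_sort ((f.aroots L).toFinset)]
        exact Fintype.prod_equiv
          ((Equiv.refl L).subtypeEquiv fun x => by simp [Multiset.mem_toFinset])
          _ _ (fun r => rfl)
    _ = ((f.aroots L).map fun r => Polynomial.eval r (g.map (algebraMap ℚ L))).prod := by
        rw [Finset.prod_eq_multiset_prod, Multiset.toFinset_val, hnodup.dedup]

lemma aux19_norm_splits {L : Type*} [Field L] [Algebra ℚ L]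
    (f : ℚ[X]) [Fact (Irreducible f)] (hf0 : f ≠ 0) (hsep : f.Separable)
    (hsplit : (f.map (algebraMap ℚ L)).Splits) (g : ℚ[X]) :
    algebraMap ℚ L (Algebra.norm ℚ (Polynomial.aeval (AdjoinRoot.root f) g))
      = ((f.aroots L).map fun r => Polynomial.eval r (g.map (algebraMap ℚ L))).prod := by
  letI : Algebra ℚ (AlgebraicClosure L) :=
    ((algebraMap L (AlgebraicClosure L)).comp (algebraMap ℚ L)).toAlgebra
  have halg : algebraMap ℚ (AlgebraicClosure L)
      = (algebraMap L (AlgebraicClosure L)).comp (algebraMap ℚ L) := rfl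
  set ι := algebraMap L (AlgebraicClosure L) with hι
  apply ι.injective
  have key := aux19_norm_algclosed (L := AlgebraicClosure L) f hf0 hsep g
  rw [halg, RingHom.comp_apply] at key
  rw [key]
  have hmapmap : f.map (algebraMap ℚ (AlgebraicClosure L)) = (f.map (algebraMap ℚ L)).map ι := by
    rw [Polynomial.map_map, halg]
  have hroots : f.aroots (AlgebraicClosure L) = (f.aroots L).map ι := by
    rw [aroots_def, hmapmap, hsplit.roots_map ι, aroots_def]
  have hgmap : g.map (algebraMap ℚ (AlgebraicClosure L)) = (g.map (algebraMap ℚ L)).map ι := by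
    rw [Polynomial.map_map, halg]
  rw [hroots, Multiset.map_map, map_multiset_prod, Multiset.map_map]
  congr 1
  apply Multiset.map_congr rfl
  intro r _
  simp only [Function.comp_apply]
  rw [← halg, hgmap, Polynomial.eval_map, Polynomial.eval₂_at_apply]

lemma aux19_discr {L : Type*} [Field L] [Algebra ℚ L] (f : ℚ[X]) [Fact (Irreducible f)]
    (hmonic : f.Monic) (hsep : f.Separable) {n : ℕ} (hdeg : f.natDegree = n)
    (hsplit : (f.map (algebraMap ℚ L)).Splits)
    (y : Fin n → L) (hy : Multiset.map y Finset.univ.val = f.aroots L) :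
    ∏ ij ∈ Finset.univ.filter (fun ij : Fin n × Fin n => ij.1 ≠ ij.2), (y ij.1 - y ij.2)
      = algebraMap ℚ L
          (Algebra.norm ℚ (Polynomial.aeval (AdjoinRoot.root f) (Polynomial.derivative f))) := by
  have hf0 : f ≠ 0 := hmonic.ne_zero
  have hF : f.map (algebraMap ℚ L) = ∏ j, (X - C (y j)) := by
    have hcard : Multiset.card ((f.map (algebraMap ℚ L)).roots)
        = (f.map (algebraMap ℚ L)).natDegree := by
      rw [natDegree_map, hdeg, show (f.map (algebraMap ℚ L)).roots = f.aroots L from rfl, ← hy]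
      simp
    have h2 := prod_multiset_X_sub_C_of_monic_of_roots_card_eq (hmonic.map _) hcard
    rw [← h2, show (f.map (algebraMap ℚ L)).roots = f.aroots L from rfl, ← hy,
      Multiset.map_map, Finset.prod_eq_multiset_prod]
    rfl
  rw [aux19_pairs y, show Polynomial.derivative (∏ j, (X - C (y j)))
      = (Polynomial.derivative f).map (algebraMap ℚ L) by rw [← hF, derivative_map],
    aux19_norm_splits f hf0 hsep hsplit (Polynomial.derivative f), ← hy, Multiset.map_map,
    Finset.prod_eq_multiset_prod]
  rfl

lemma aux19_N_int (α : ℂ) (hint : IsIntegral ℤ α) :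
    ∃ m : ℤ, (m : ℚ) = Algebra.norm ℚ (Polynomial.aeval (AdjoinRoot.root (minpoly ℚ α))
      (Polynomial.derivative (minpoly ℚ α))) := by
  have hα : IsIntegral ℚ α := hint.tower_top
  set f := minpoly ℚ α with hfdef
  have hmonic : f.Monic := minpoly.monic hα
  have hf0 : f ≠ 0 := hmonic.ne_zero
  haveI : Fact (Irreducible f) := ⟨minpoly.irreducible hα⟩
  haveI : FiniteDimensional ℚ (AdjoinRoot f) := (AdjoinRoot.powerBasis hf0).finite
  have hfZ : f = (minpoly ℤ α).map (algebraMap ℤ ℚ) :=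
    minpoly.isIntegrallyClosed_eq_field_fractions ℚ ℂ hint
  have hcomp : algebraMap ℤ (AdjoinRoot f)
      = (algebraMap ℚ (AdjoinRoot f)).comp (algebraMap ℤ ℚ) := by
    ext1 n
    simp
  have hrootint : IsIntegral ℤ (AdjoinRoot.root f) := by
    refine ⟨minpoly ℤ α, minpoly.monic hint, ?_⟩
    rw [hcomp, ← Polynomial.eval₂_map, ← hfZ]
    exact AdjoinRoot.eval₂_root f
  have hβint : IsIntegral ℤ (Polynomial.aeval (AdjoinRoot.root f)
      (Polynomial.derivative f)) := by
    have hD : Polynomial.derivative f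
        = (Polynomial.derivative (minpoly ℤ α)).map (algebraMap ℤ ℚ) := by
      rw [hfZ, derivative_map]
    rw [hD, Polynomial.aeval_map_algebraMap]
    have hmem : Polynomial.aeval (AdjoinRoot.root f) (Polynomial.derivative (minpoly ℤ α))
        ∈ integralClosure ℤ (AdjoinRoot f) := by
      refine Algebra.adjoin_le ?_ (Polynomial.aeval_mem_adjoin_singleton ℤ (AdjoinRoot.root f))
      rw [Set.singleton_subset_iff]
      exact hrootint
    exact hmem
  have hNint : IsIntegral ℤ (Algebra.norm ℚ (Polynomial.aeval (AdjoinRoot.root f)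
      (Polynomial.derivative f))) := Algebra.isIntegral_norm ℚ hβint
  obtain ⟨m, hm⟩ := IsIntegrallyClosed.isIntegral_iff.1 hNint
  exact ⟨m, hm⟩

lemma aux19_padic (p : ℕ) [Fact p.Prime] (m : ℤ) (hm : m ≠ 0) :
    ‖(m : ℚ_[p])‖⁻¹ ≤ |(m : ℝ)| := by
  have hm' : (m : ℚ_[p]) ≠ 0 := Int.cast_ne_zero.2 hm
  obtain ⟨nn, hnn⟩ := Padic.padicNormE.image (p := p) hm'
  have hp1 : (1 : ℝ) < (p : ℝ) := by exact_mod_cast (Fact.out : p.Prime).one_lt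
  have hnorm : ‖(m : ℚ_[p])‖ = (p : ℝ) ^ (-nn) := by rw [hnn]; push_cast; ring
  have hn0 : 0 ≤ nn := by
    by_contra h
    push_neg at h
    have h1 : ‖(m : ℚ_[p])‖ ≤ 1 := Padic.norm_int_le_one m
    have h2 : (1 : ℝ) < (p : ℝ) ^ (-nn) := one_lt_zpow₀ hp1 (by omega)
    rw [hnorm] at h1
    linarith
  lift nn to ℕ using hn0 with e
  have hdvd : (p ^ e : ℤ) ∣ m :=
    (Padic.norm_int_le_pow_iff_dvd m e).1 (le_of_eq hnorm)
  have hle : (p : ℤ) ^ e ≤ |m| := Int.le_of_dvd (abs_pos.2 hm) ((dvd_abs _ _).2 hdvd)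
  have heq : ‖(m : ℚ_[p])‖⁻¹ = (p : ℝ) ^ e := by
    rw [hnorm, zpow_neg, inv_inv, zpow_natCast]
  rw [heq, ← Int.cast_abs]
  exact_mod_cast hle

/-- Let `α` be a totally `p`-adic algebraic integer of degree `n`, with `p`-adic
conjugates `x_1, …, x_n` (the roots of its minimal polynomial in `ℚ_p`; they lie in
`ℤ_p` by integrality) and complex conjugates `z_1, …, z_n`. Then
`∏_{i≠j}|x_i - x_j|_p ≤ d_n(ℤ_p)^{n(n-1)}`, and since the discriminant is a nonzero
rational integer (so the product of its absolute values over all places is `1` and its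
absolute value at every finite place is at most `1`),
`∏_{i≠j}|z_i - z_j| ≥ d_n(ℤ_p)^{-n(n-1)}`. -/
theorem statement19 (p : ℕ) [Fact p.Prime] (α : ℂ) (hint : IsIntegral ℤ α)
    (n : ℕ) (hn : 2 ≤ n) (hdeg : (minpoly ℚ α).natDegree = n)
    (hsplit : ((minpoly ℚ α).map (algebraMap ℚ ℚ_[p])).Splits)
    (x : Fin n → ℚ_[p])
    (hx : Multiset.map x Finset.univ.val = (minpoly ℚ α).aroots ℚ_[p])
    (hxint : ∀ i, ‖x i‖ ≤ 1)
    (z : Fin n → ℂ)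
    (hz : Multiset.map z Finset.univ.val = (minpoly ℚ α).aroots ℂ) :
    (∏ ij ∈ Finset.univ.filter (fun ij : Fin n × Fin n => ij.1 ≠ ij.2),
        ‖x ij.1 - x ij.2‖) ≤ dn {y : ℚ_[p] | ‖y‖ ≤ 1} n ^ (n * (n - 1) : ℕ)
    ∧ dn {y : ℚ_[p] | ‖y‖ ≤ 1} n ^ (-((n : ℝ) * ((n : ℝ) - 1)))
        ≤ ∏ ij ∈ Finset.univ.filter (fun ij : Fin n × Fin n => ij.1 ≠ ij.2),
            ‖z ij.1 - z ij.2‖ := by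
  have hα : IsIntegral ℚ α := hint.tower_top
  have hmonic : (minpoly ℚ α).Monic := minpoly.monic hα
  have hf0 : minpoly ℚ α ≠ 0 := hmonic.ne_zero
  haveI : Fact (Irreducible (minpoly ℚ α)) := ⟨minpoly.irreducible hα⟩
  haveI : FiniteDimensional ℚ (AdjoinRoot (minpoly ℚ α)) :=
    (AdjoinRoot.powerBasis hf0).finite
  have hsep : (minpoly ℚ α).Separable := (minpoly.irreducible hα).separable
  obtain ⟨m, hm⟩ : ∃ m : ℤ, (m : ℚ) = Algebra.norm ℚ (Polynomial.aeval
      (AdjoinRoot.root (minpoly ℚ α)) (Polynomial.derivative (minpoly ℚ α))) := aux19_N_int α hint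
  have hDx := aux19_discr (minpoly ℚ α) hmonic hsep hdeg hsplit x hx
  have hDz := aux19_discr (minpoly ℚ α) hmonic hsep hdeg
    (IsAlgClosed.splits _) z hz
  have hβ0 : Polynomial.aeval (AdjoinRoot.root (minpoly ℚ α))
      (Polynomial.derivative (minpoly ℚ α)) ≠ 0 := by
    intro h0
    obtain ⟨a, b, hab⟩ := hsep
    have h2 := congrArg (Polynomial.aeval (AdjoinRoot.root (minpoly ℚ α))) hab
    have hzero : Polynomial.aeval (AdjoinRoot.root (minpoly ℚ α)) (minpoly ℚ α) = 0 := by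
      exact (AdjoinRoot.aeval_eq _).trans AdjoinRoot.mk_self
    rw [map_add, map_mul, map_mul, map_one, hzero, h0, mul_zero, mul_zero, add_zero] at h2
    exact zero_ne_one h2
  have hm0 : m ≠ 0 := by
    intro h
    apply hβ0
    have hNz : Algebra.norm ℚ (Polynomial.aeval (AdjoinRoot.root (minpoly ℚ α))
        (Polynomial.derivative (minpoly ℚ α))) = 0 := by
      rw [← hm, h, Int.cast_zero]
    exact Algebra.norm_eq_zero_iff.1 hNz
  -- rewrite the two products in terms of m
  have hPx : (∏ ij ∈ Finset.univ.filter (fun ij : Fin n × Fin n => ij.1 ≠ ij.2),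
      ‖x ij.1 - x ij.2‖) = ‖(m : ℚ_[p])‖ := by
    rw [← norm_prod, hDx, ← hm, eq_ratCast, Rat.cast_intCast]
  have hQz : (∏ ij ∈ Finset.univ.filter (fun ij : Fin n × Fin n => ij.1 ≠ ij.2),
      ‖z ij.1 - z ij.2‖) = |(m : ℝ)| := by
    rw [← norm_prod, hDz, ← hm, eq_ratCast, Rat.cast_intCast, Complex.norm_intCast]
  -- numeric bookkeeping
  have hsub : ∀ a b : ℚ_[p], ‖a‖ ≤ 1 → ‖b‖ ≤ 1 → ‖a - b‖ ≤ 1 := by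
    intro a b ha hb
    have h := Padic.nonarchimedean a (-b)
    rw [← sub_eq_add_neg] at h
    exact h.trans (max_le ha (by rwa [norm_neg]))
  have hn1R : (0 : ℝ) < (n : ℝ) * ((n : ℝ) - 1) := by
    have h2 : (2 : ℝ) ≤ (n : ℝ) := by exact_mod_cast hn
    nlinarith
  have hkcast : ((n * (n - 1) : ℕ) : ℝ) = (n : ℝ) * ((n : ℝ) - 1) := by
    have h1 : 1 ≤ n := by omega
    push_cast [h1]
    ring
  have hbdd : BddAbove {t : ℝ | ∃ w : Fin n → ℚ_[p], (∀ i, w i ∈ {y : ℚ_[p] | ‖y‖ ≤ 1}) ∧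
      t = (∏ ij ∈ Finset.univ.filter (fun ij : Fin n × Fin n => ij.1 ≠ ij.2),
        ‖w ij.1 - w ij.2‖) ^ (((n : ℝ) * (n - 1))⁻¹)} := by
    refine ⟨1, ?_⟩
    rintro t ⟨w, hw, rfl⟩
    exact Real.rpow_le_one (Finset.prod_nonneg fun _ _ => norm_nonneg _)
      (Finset.prod_le_one (fun _ _ => norm_nonneg _) fun ij _ => hsub _ _ (hw _) (hw _))
      (inv_nonneg.2 hn1R.le)
  set P := ∏ ij ∈ Finset.univ.filter (fun ij : Fin n × Fin n => ij.1 ≠ ij.2),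
      ‖x ij.1 - x ij.2‖ with hPdef
  have hP0 : 0 ≤ P := Finset.prod_nonneg fun _ _ => norm_nonneg _
  have hPpos : 0 < P := by
    rw [hPx]
    exact norm_pos_iff.2 (Int.cast_ne_zero.2 hm0)
  have hdn1 : P ^ (((n : ℝ) * (n - 1))⁻¹) ≤ dn {y : ℚ_[p] | ‖y‖ ≤ 1} n :=
    le_csSup hbdd ⟨x, hxint, hPdef ▸ rfl⟩
  have hdpos : 0 < dn {y : ℚ_[p] | ‖y‖ ≤ 1} n :=
    lt_of_lt_of_le (Real.rpow_pos_of_pos hPpos _) hdn1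
  have hpow : P = (P ^ (((n : ℝ) * (n - 1))⁻¹)) ^ (n * (n - 1) : ℕ) := by
    rw [← Real.rpow_natCast (P ^ (((n : ℝ) * (n - 1))⁻¹)), ← Real.rpow_mul hP0, hkcast,
      inv_mul_cancel₀ hn1R.ne', Real.rpow_one]
  have part1 : P ≤ dn {y : ℚ_[p] | ‖y‖ ≤ 1} n ^ (n * (n - 1) : ℕ) := by
    nth_rewrite 1 [hpow]
    exact pow_le_pow_left₀ (Real.rpow_nonneg hP0 _) hdn1 _
  refine ⟨part1, ?_⟩
  calc dn {y : ℚ_[p] | ‖y‖ ≤ 1} n ^ (-((n : ℝ) * ((n : ℝ) - 1)))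
      = (dn {y : ℚ_[p] | ‖y‖ ≤ 1} n ^ (n * (n - 1) : ℕ))⁻¹ := by
        rw [← hkcast, Real.rpow_neg hdpos.le, Real.rpow_natCast]
    _ ≤ P⁻¹ := inv_anti₀ hPpos part1
    _ = ‖(m : ℚ_[p])‖⁻¹ := by rw [hPx]
    _ ≤ |(m : ℝ)| := aux19_padic p m hm0
    _ = _ := hQz.symm
end
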